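/- arXiv:1607.00071 — 8 statements merged into one kernel-verified Lean document; each statement's English description precedes it below -/
import Mathlib

section
/- Let n > 1 and let h_1, ..., h_n be nonzero elements of a real (or complex) Hilbert space H such that no two of them are collinear (i.e., h_i is not a scalar multiple of h_j for i ≠ j). Then the tensor powers h_1^{⊗(n-1)}, ..., h_n^{⊗(n-1)} are linearly independent in H^{⊗(n-1)}. -/
/-!
Pick linear functionals `φ, ψ` with `ψ (h i) ≠ 0` for all `i` and the ratios `rᵢ = φ(hᵢ)/ψ(hᵢ)`
pairwise distinct: over an infinite field finitely many proper subspaces never cover the space,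
and `ψ(hⱼ) hᵢ - ψ(hᵢ) hⱼ ≠ 0` by non-collinearity. Testing a vanishing combination
`∑ cᵢ hᵢ^{⊗k}` against `φ^{⊗m} ⊗ ψ^{⊗(k-m)}` gives `∑ cᵢ ψ(hᵢ)^k rᵢ^m = 0` for `m ≤ k`; since
`n ≤ k + 1` these Vandermonde equations force `cᵢ ψ(hᵢ)^k = 0`.
-/

open Module

section Field

variable {K : Type*} [Field K]

theorem eq_zero_of_forall_sum_mul_pow_mul_pow_eq_zero {n k : ℕ} (hnk : n ≤ k + 1)
    {f g c : Fin n → K} (hg : ∀ i, g i ≠ 0) (hfg : Function.Injective fun i => f i / g i)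
    (hc : ∀ m d, m + d = k → ∑ i, c i * (f i ^ m * g i ^ d) = 0) : c = 0 := by
  have hweighted : (fun i => c i * g i ^ k) = 0 := by
    refine Matrix.eq_zero_of_forall_pow_sum_mul_pow_eq_zero hfg fun m => ?_
    rw [← hc m (k - m) (by omega)]
    refine Finset.sum_congr rfl fun i _ => ?_
    rw [div_pow, pow_sub₀ _ (hg i) (by omega)]
    field_simp
  funext i
  simpa [hg i] using congrFun hweighted i

variable {V : Type*} [AddCommGroup V] [Module K V]

theorem Module.exists_dual_injective_div [Infinite K] {ι : Type*} [Finite ι] (h : ι → V)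
    (hz : ∀ i, h i ≠ 0) (hcol : ∀ i j, i ≠ j → ∀ c : K, h i ≠ c • h j) :
    ∃ φ ψ : Dual K V, (∀ i, ψ (h i) ≠ 0) ∧ Function.Injective fun i => φ (h i) / ψ (h i) := by
  obtain ⟨ψ, hψ⟩ := exists_dual_forall_apply_ne_zero (K := K) h hz
  let a : {p : ι × ι // p.1 ≠ p.2} → V := fun p => ψ (h p.1.2) • h p.1.1 - ψ (h p.1.1) • h p.1.2
  have ha : ∀ p, a p ≠ 0 := by
    rintro ⟨⟨i, j⟩, hij⟩ hp
    refine hcol i j hij (ψ (h i) / ψ (h j)) ?_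
    rw [div_eq_inv_mul, ← smul_smul, ← sub_eq_zero.mp hp, smul_smul, inv_mul_cancel₀ (hψ j),
      one_smul]
  obtain ⟨φ, hφ⟩ := exists_dual_forall_apply_ne_zero (K := K) a ha
  refine ⟨φ, ψ, hψ, fun i j hij => by_contra fun hne => hφ ⟨(i, j), hne⟩ ?_⟩
  rw [div_eq_div_iff (hψ i) (hψ j)] at hij
  simp only [a, map_sub, map_smul, smul_eq_mul]
  linear_combination hij

end Field

theorem PiTensorProduct.sum_mul_prod_eq_zero_of_sum_smul_tprod_eq_zero {R M ι κ : Type*}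
    [CommSemiring R] [AddCommMonoid M] [Module R M] [Fintype ι] [Fintype κ] {v : ι → M}
    {c : ι → R} (hc : ∑ i, c i • tprod R (fun _ : κ => v i) = 0) (φ : κ → Dual R M) :
    ∑ i, c i * ∏ j, φ j (v i) = 0 := by
  simpa using congr(dualDistrib (tprod R φ) $hc)

theorem linearIndependent_tprod_const {K V : Type*} [Field K] [Infinite K] [AddCommGroup V]
    [Module K V] {n k : ℕ} (hnk : n ≤ k + 1) (h : Fin n → V) (hz : ∀ i, h i ≠ 0)
    (hcol : ∀ i j, i ≠ j → ∀ c : K, h i ≠ c • h j) :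
    LinearIndependent K fun i => PiTensorProduct.tprod K fun _ : Fin k => h i := by
  obtain ⟨φ, ψ, hψ, hinj⟩ := exists_dual_injective_div h hz hcol
  rw [Fintype.linearIndependent_iff]
  intro c hc
  refine congrFun (eq_zero_of_forall_sum_mul_pow_mul_pow_eq_zero hnk hψ hinj fun m d hmd => ?_)
  subst hmd
  simpa [Fin.prod_univ_add] using
    PiTensorProduct.sum_mul_prod_eq_zero_of_sum_smul_tprod_eq_zero hc
      (Fin.append (fun _ : Fin m => φ) fun _ : Fin d => ψ)

theorem tensor_powers_linearIndependent_general
    {H : Type*} [NormedAddCommGroup H] [InnerProductSpace ℝ H]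
    (n : ℕ) (h : Fin n → H)
    (hz : ∀ i, h i ≠ 0)
    (hcol : ∀ i j, i ≠ j → ∀ c : ℝ, h i ≠ c • h j) :
    LinearIndependent ℝ
      (fun i : Fin n => PiTensorProduct.tprod ℝ (fun _ : Fin (n - 1) => h i)) :=
  linearIndependent_tprod_const (by omega) h hz hcol

/-- If `h 1, …, h n` (`n > 1`) are nonzero, pairwise non-collinear elements of a real Hilbert
space `H`, then the tensor powers `(h 1)^{⊗(n-1)}, …, (h n)^{⊗(n-1)}` are linearly
independent in `H^{⊗(n-1)}`. (Linear independence of these algebraic tensors is equivalent to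
linear independence in the Hilbert space tensor power, since the algebraic tensor power embeds
in its completion.) -/
theorem tensor_powers_linearIndependent
    {H : Type*} [NormedAddCommGroup H] [InnerProductSpace ℝ H] [CompleteSpace H]
    (n : ℕ) (hn : 1 < n) (h : Fin n → H)
    (hz : ∀ i, h i ≠ 0)
    (hcol : ∀ i j, i ≠ j → ∀ c : ℝ, h i ≠ c • h j) :
    LinearIndependent ℝ
      (fun i : Fin n => PiTensorProduct.tprod ℝ (fun _ : Fin (n - 1) => h i)) :=
  tensor_powers_linearIndependent_general n h hz hcol
end

section
/- Any mixture of measures with m components is (2m−1)-identifiable: if P = Σ_{i=1}^m a_i δ_{μ_i} and P' = Σ_{j=1}^l b_j δ_{ν_j} are mixtures of measures on an arbitrary measurable space with l ≤ m, and Σ_{i=1}^m a_i μ_i^{×(2m−1)} = Σ_{j=1}^l b_j ν_j^{×(2m−1)} as measures on the (2m−1)-fold product space, then P = P' (i.e., l = m and there is a permutation σ with ν_j = μ_{σ(j)} and b_j = a_{σ(j)}). -/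
open MeasureTheory

/-- A mixture of measures on a measurable space `Ω`: a finite convex combination
`∑ i, w i • δ_{μ i}` of Dirac masses at distinct probability measures, with
strictly positive weights summing to one. -/
structure MixtureOfMeasures (Ω : Type*) [MeasurableSpace Ω] where
  m : ℕ
  w : Fin m → ℝ
  μ : Fin m → Measure Ω
  prob : ∀ i, IsProbabilityMeasure (μ i)
  pos : ∀ i, 0 < w i
  sum_one : ∑ i, w i = 1
  inj : Function.Injective μ

namespace MixtureOfMeasures

variable {Ω : Type*} [MeasurableSpace Ω]

/-- `V n P = ∑ i, w i • (μ i)^{×n}`, the measure on the `n`-fold product space induced by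
drawing `μ ∼ P` and then `n` iid samples from `μ`. -/
noncomputable def V (P : MixtureOfMeasures Ω) (n : ℕ) : Measure (Fin n → Ω) :=
  ∑ i, ENNReal.ofReal (P.w i) • Measure.pi (fun _ : Fin n => P.μ i)

/-- Two mixtures of measures are equal (as mixtures) if their components and weights agree
up to a permutation. -/
def Equal (P P' : MixtureOfMeasures Ω) : Prop :=
  ∃ σ : Fin P'.m ≃ Fin P.m, ∀ j, P'.μ j = P.μ (σ j) ∧ P'.w j = P.w (σ j)

end MixtureOfMeasures

/-!
Finitely many measures are told apart by finitely many measurable sets `A k`, and then by the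
integral of the single function `f = ∑ k, ε ^ k • 𝟙_{A k}` for all but finitely many `ε` (the
integrals are polynomials in `ε`). Integrating `∏ t ∈ s, f (x t)` against `V n` gives the moment
`∑ i, w i * (∫ f ∂μ i) ^ #s`, so `V (2m - 1)` determines the power sums of orders `< 2m` of the
values `∫ f ∂μ i`, weighted by `w i`. Together the two mixtures involve at most `m + l ≤ 2m`
distinct values, so a Vandermonde argument shows that they put the same weight on every measure.
-/

open Polynomial Finset

theorem exists_injOn_sum_mul_pow {K : Type*} [Field K] [Infinite K] {N : ℕ}
    {S : Set (Fin N → K)} (hS : S.Finite) :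
    ∃ ε : K, S.InjOn fun v => ∑ k : Fin N, v k * ε ^ (k : ℕ) := by
  let Q : (Fin N → K) → K[X] := fun a => ∑ k, C (a k) * X ^ (k : ℕ)
  have hQ_coeff : ∀ a (k : Fin N), (Q a).coeff k = a k := by
    intro a k
    simp [Q, finsetSum_coeff, Fin.val_inj]
  have hbad : (⋃ p ∈ S ×ˢ S \ Set.diagonal _, {ε | (Q (p.1 - p.2)).IsRoot ε}).Finite := by
    refine (hS.prod hS).sdiff.biUnion fun p hp => finite_setOfPred_isRoot fun h0 => hp.2 ?_
    funext k
    simpa [hQ_coeff, sub_eq_zero] using congrArg (coeff · (k : ℕ)) h0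
  obtain ⟨ε, hε⟩ := hbad.infinite_compl.nonempty
  refine ⟨ε, fun v hv w hw hvw => by_contra fun hne =>
    hε (Set.mem_biUnion (x := (v, w)) ⟨⟨hv, hw⟩, hne⟩ ?_)⟩
  simpa [Q, IsRoot, eval_finsetSum, sub_mul, sum_sub_distrib, sub_eq_zero] using hvw

theorem sum_fiber_eq_zero_of_forall_sum_mul_pow_eq_zero {ι K : Type*} [Fintype ι] [Field K]
    [DecidableEq K] (c φ : ι → K) (h : ∀ j < Fintype.card ι, ∑ x, c x * φ x ^ j = 0) (t : K) :
    ∑ x with φ x = t, c x = 0 := by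
  set s := univ.image φ
  let F : K → K := fun u => ∑ x with φ x = u, c x
  have hF : ∀ j < Fintype.card ι, ∑ u ∈ s, F u * u ^ j = 0 := by
    intro j hj
    rw [← h j hj, ← sum_fiberwise_of_maps_to (g := φ) (t := s)
      fun x _ => mem_image_of_mem φ (mem_univ x)]
    refine sum_congr rfl fun u _ => ?_
    rw [sum_mul]
    exact sum_congr rfl fun x hx => by rw [(mem_filter.1 hx).2]
  have hvan : (fun k => F (s.equivFin.symm k)) = 0 :=
    Matrix.eq_zero_of_forall_pow_sum_mul_pow_eq_zero (f := fun k => (s.equivFin.symm k : K))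
      (fun _ _ hkl => s.equivFin.symm.injective (Subtype.ext hkl)) fun j => by
        rw [s.equivFin.symm.sum_comp (fun u : s => F u * (u : K) ^ (j : ℕ)),
          sum_coe_sort s fun u => F u * u ^ (j : ℕ)]
        exact hF j (j.2.trans_le (card_image_le.trans_eq card_univ))
  by_cases ht : t ∈ s
  · simpa using congrFun hvan (s.equivFin ⟨t, ht⟩)
  · exact sum_eq_zero fun x hx =>
      absurd (mem_image_of_mem φ (mem_univ x)) (by rwa [(mem_filter.1 hx).2])

section Measures

variable {Ω : Type*} [MeasurableSpace Ω]

theorem exists_measurableSet_family_injOn {S : Set (Measure Ω)} (hS : S.Finite) :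
    ∃ (N : ℕ) (A : Fin N → Set Ω), (∀ k, MeasurableSet (A k)) ∧ S.InjOn fun ρ k => ρ (A k) := by
  have hpair : ∀ p : S × S, ∃ s, MeasurableSet s ∧
      ((p.1 : Measure Ω) s = (p.2 : Measure Ω) s → (p.1 : Measure Ω) = p.2) := by
    intro p
    by_cases h : (p.1 : Measure Ω) = p.2
    · exact ⟨∅, .empty, fun _ => h⟩
    · obtain ⟨s, hs, hne⟩ : ∃ s, MeasurableSet s ∧ (p.1 : Measure Ω) s ≠ (p.2 : Measure Ω) s := by
        by_contra! h'
        exact h (Measure.ext h')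
      exact ⟨s, hs, fun heq => absurd heq hne⟩
  choose A hA hsep using hpair
  have := hS.to_subtype
  let e := Finite.equivFin (S × S)
  refine ⟨_, fun k => A (e.symm k), fun k => hA _, fun ρ hρ ρ' hρ' h => ?_⟩
  simpa using hsep (⟨ρ, hρ⟩, ⟨ρ', hρ'⟩) (by simpa using congrFun h (e (⟨ρ, hρ⟩, ⟨ρ', hρ'⟩)))

theorem exists_integrable_injOn_integral {S : Set (Measure Ω)} (hS : S.Finite)
    (hfin : ∀ ρ ∈ S, IsFiniteMeasure ρ) :
    ∃ f : Ω → ℝ, (∀ ρ ∈ S, Integrable f ρ) ∧ S.InjOn fun ρ => ∫ ω, f ω ∂ρ := by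
  obtain ⟨N, A, hA, hAinj⟩ := exists_measurableSet_family_injOn hS
  obtain ⟨ε, hε⟩ := exists_injOn_sum_mul_pow (hS.image fun ρ k => ρ.real (A k))
  let f : Ω → ℝ := fun ω => ∑ k, (A k).indicator (fun _ => ε ^ (k : ℕ)) ω
  have hf_int : ∀ ρ ∈ S, Integrable f ρ := fun ρ hρ =>
    have := hfin ρ hρ
    integrable_finsetSum _ fun k _ => (integrable_const _).indicator (hA k)
  have hf : ∀ ρ ∈ S, ∫ ω, f ω ∂ρ = ∑ k, ρ.real (A k) * ε ^ (k : ℕ) := by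
    intro ρ hρ
    have := hfin ρ hρ
    rw [integral_finsetSum _ fun k _ => (integrable_const _).indicator (hA k)]
    simp [integral_indicator_const _ (hA _)]
  refine ⟨f, hf_int, fun ρ hρ ρ' hρ' h => hAinj hρ hρ' (funext fun k => ?_)⟩
  have := hfin ρ hρ
  have := hfin ρ' hρ'
  have hreal := congrFun (hε (Set.mem_image_of_mem _ hρ) (Set.mem_image_of_mem _ hρ')
    (by simpa [hf ρ hρ, hf ρ' hρ'] using h)) k
  exact (ENNReal.toReal_eq_toReal_iff' (measure_ne_top _ _) (measure_ne_top _ _)).1 hreal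

theorem integral_prod_apply_pi_eq_pow {ι : Type*} [Fintype ι]
    (μ : Measure Ω) [IsProbabilityMeasure μ] (f : Ω → ℝ) (s : Finset ι) :
    ∫ x, ∏ t ∈ s, f (x t) ∂Measure.pi (fun _ : ι => μ) = (∫ ω, f ω ∂μ) ^ #s := by
  classical
  calc ∫ x, ∏ t ∈ s, f (x t) ∂Measure.pi (fun _ : ι => μ)
      = ∫ x, ∏ t, (if t ∈ s then f else 1) (x t) ∂Measure.pi (fun _ : ι => μ) := by
        simp only [ite_apply, Pi.one_apply, prod_ite_mem_eq]
    _ = ∏ t, ∫ ω, (if t ∈ s then f else 1) ω ∂μ := integral_fintype_prod_eq_prod _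
    _ = ∏ t, if t ∈ s then ∫ ω, f ω ∂μ else 1 := prod_congr rfl fun t _ => by split_ifs <;> simp
    _ = (∫ ω, f ω ∂μ) ^ #s := by rw [prod_ite_mem_eq, prod_const]

theorem integrable_prod_apply_pi {ι : Type*} [Fintype ι]
    {μ : Measure Ω} [IsFiniteMeasure μ] {f : Ω → ℝ} (hf : Integrable f μ) (s : Finset ι) :
    Integrable (fun x => ∏ t ∈ s, f (x t)) (Measure.pi fun _ : ι => μ) := by
  classical
  simpa only [ite_apply, Pi.one_apply, prod_ite_mem_eq] using
    Integrable.fintype_prod (f := fun t => if t ∈ s then f else 1) (μ := fun _ => μ)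
      fun t => by split_ifs; exacts [hf, integrable_const 1]

end Measures

namespace MixtureOfMeasures

variable {Ω : Type*} [MeasurableSpace Ω] (P Q : MixtureOfMeasures Ω)

theorem integral_prod_apply_V {f : Ω → ℝ} (hf : ∀ i, Integrable f (P.μ i)) {n : ℕ}
    (s : Finset (Fin n)) :
    ∫ x, ∏ t ∈ s, f (x t) ∂P.V n = ∑ i, P.w i * (∫ ω, f ω ∂P.μ i) ^ #s := by
  have := P.prob
  rw [V, integral_finsetSum_measure fun i _ =>
    (integrable_prod_apply_pi (hf i) s).smul_measure ENNReal.ofReal_ne_top]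
  refine sum_congr rfl fun i _ => ?_
  rw [integral_smul_measure, integral_prod_apply_pi_eq_pow, ENNReal.toReal_ofReal (P.pos i).le,
    smul_eq_mul]

open Classical in
noncomputable def weight (ρ : Measure Ω) : ℝ :=
  ∑ i with P.μ i = ρ, P.w i

theorem weight_μ (i : Fin P.m) : P.weight (P.μ i) = P.w i := by
  simp [weight, P.inj.eq_iff, sum_filter]

theorem exists_μ_eq_of_weight_ne_zero {ρ : Measure Ω} (h : P.weight ρ ≠ 0) : ∃ i, P.μ i = ρ := by
  classical
  by_contra! h'
  exact h (sum_eq_zero fun i hi => absurd (mem_filter.1 hi).2 (h' i))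

theorem exists_injective_of_weight_eq (h : P.weight = Q.weight) :
    ∃ σ : Fin P.m → Fin Q.m,
      Function.Injective σ ∧ ∀ i, Q.μ (σ i) = P.μ i ∧ Q.w (σ i) = P.w i := by
  have hmatch : ∀ i, ∃ j, Q.μ j = P.μ i ∧ Q.w j = P.w i := by
    intro i
    have hQ : Q.weight (P.μ i) = P.w i := by rw [← h, weight_μ]
    obtain ⟨j, hj⟩ := Q.exists_μ_eq_of_weight_ne_zero (hQ ▸ (P.pos i).ne')
    exact ⟨j, hj, by rw [← Q.weight_μ, hj, hQ]⟩
  choose σ hσ using hmatch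
  exact ⟨σ, fun i i' hii' => P.inj (by rw [← (hσ i).1, ← (hσ i').1, hii']), hσ⟩

theorem equal_of_weight_eq (h : P.weight = Q.weight) : P.Equal Q := by
  obtain ⟨σ, hσ, hσ_eq⟩ := Q.exists_injective_of_weight_eq P h.symm
  obtain ⟨τ, hτ, -⟩ := P.exists_injective_of_weight_eq Q h
  have hbij : Function.Bijective σ := (Fintype.bijective_iff_injective_and_card σ).2
    ⟨hσ, le_antisymm (Fintype.card_le_of_injective σ hσ) (Fintype.card_le_of_injective τ hτ)⟩
  exact ⟨Equiv.ofBijective σ hbij, fun j => ⟨(hσ_eq j).1.symm, (hσ_eq j).2.symm⟩⟩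

theorem weight_eq_of_forall_sum_mul_pow_eq (Φ : Measure Ω → ℝ)
    (hΦ : (Set.range P.μ ∪ Set.range Q.μ).InjOn Φ)
    (h : ∀ j < P.m + Q.m, ∑ i, P.w i * Φ (P.μ i) ^ j = ∑ i, Q.w i * Φ (Q.μ i) ^ j) :
    P.weight = Q.weight := by
  classical
  let κ : Fin P.m ⊕ Fin Q.m → Measure Ω := Sum.elim P.μ Q.μ
  let c : Fin P.m ⊕ Fin Q.m → ℝ := Sum.elim P.w fun j => -Q.w j
  have hfiber := sum_fiber_eq_zero_of_forall_sum_mul_pow_eq_zero c (Φ ∘ κ) fun j hj => by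
    simp [Fintype.sum_sum_type, c, κ, h j (by simpa using hj)]
  funext ρ
  have hdiff : ∑ x with κ x = ρ, c x = P.weight ρ - Q.weight ρ := by
    simp only [sum_filter, Fintype.sum_sum_type, Sum.elim_inl, Sum.elim_inr, weight, sub_eq_add_neg,
      ← sum_neg_distrib, apply_ite, neg_zero, κ, c]
    rfl
  suffices ∑ x with κ x = ρ, c x = 0 by linarith
  by_cases hρ : ∃ x, κ x = ρ
  · obtain ⟨x₀, rfl⟩ := hρ
    have hκ : ∀ x, κ x ∈ Set.range P.μ ∪ Set.range Q.μ := by rintro (i | j) <;> simp [κ]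
    rw [filter_congr fun x _ => (hΦ.eq_iff (hκ x) (hκ x₀)).symm]
    exact hfiber _
  · push Not at hρ
    exact sum_eq_zero fun x hx => absurd (mem_filter.1 hx).2 (hρ x)

end MixtureOfMeasures

/-- Any mixture of measures with `m` components is `(2m-1)`-identifiable. -/
theorem mixture_identifiable_two_m_sub_one {Ω : Type*} [MeasurableSpace Ω]
    (P P' : MixtureOfMeasures Ω) (hord : P'.m ≤ P.m)
    (hV : P'.V (2 * P.m - 1) = P.V (2 * P.m - 1)) :
    P'.Equal P := by
  have hfin : ∀ ρ ∈ Set.range P'.μ ∪ Set.range P.μ, IsFiniteMeasure ρ := by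
    have := P.prob
    have := P'.prob
    rintro _ (⟨i, rfl⟩ | ⟨i, rfl⟩) <;> infer_instance
  obtain ⟨f, hf, hinj⟩ :=
    exists_integrable_injOn_integral ((Set.finite_range _).union (Set.finite_range _)) hfin
  refine P'.equal_of_weight_eq P (P'.weight_eq_of_forall_sum_mul_pow_eq P _ hinj fun j hj => ?_)
  obtain ⟨s, -, rfl⟩ := exists_subset_card_eq (s := (univ : Finset (Fin (2 * P.m - 1)))) (n := j)
    (by simp only [card_univ, Fintype.card_fin]; omega)
  rw [← P'.integral_prod_apply_V fun i => hf _ (.inl ⟨i, rfl⟩),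
    ← P.integral_prod_apply_V fun i => hf _ (.inr ⟨i, rfl⟩), hV]
end

section
/- Any mixture of measures with m components is 2m-determined: if P = Σ_{i=1}^m a_i δ_{μ_i} is a mixture of measures with m components and P' = Σ_{j=1}^l b_j δ_{ν_j} is any mixture of measures (with l arbitrary) on the same measurable space such that Σ_{i=1}^m a_i μ_i^{×2m} = Σ_{j=1}^l b_j ν_j^{×2m}, then P = P'. -/
open MeasureTheory

/-! For measurable sets `B s` and reals `c s`, the polynomial `μ ↦ ∏ s, (μ (B s) - c s)` in the
values of `μ` is the integral of `x ↦ ∏ s, (1_{B s} (x s) - c s)` against `μ^{×n}`, so its average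
over the mixture is determined by `∑ i, a i • μ i^{×n}`. With `n = 2m`, we may average the square of
a product of `m` such factors. Choosing for each component `μ t ≠ ν` of `P` a set `A t` on which
`μ t` and `ν` differ, and `c t = μ t (A t)`, gives a nonnegative test function vanishing at every
component of `P` other than `ν` and positive at `ν`. If a component `ν` of `P'` were not one of `P`,
this function would average to `0` over `P` but not over `P'`; once every component of `P'` is one of
`P`, the two averages for `ν` a component of `P` are its two weights times the value at `ν`. -/

open Finset Function

lemma exists_equiv_of_sum_fiber_eq {X ι ι' : Type*} [DecidableEq X] [Fintype ι] [Fintype ι']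
    {μ : ι → X} {μ' : ι' → X} {w : ι → ℝ} {w' : ι' → ℝ}
    (hμ : Injective μ) (hμ' : Injective μ') (hw : ∀ i, 0 < w i)
    (hrange : ∀ j, μ' j ∈ Set.range μ) (hsum : ∀ i, ∑ j with μ' j = μ i, w' j = w i) :
    ∃ σ : ι ≃ ι', ∀ i, μ i = μ' (σ i) ∧ w i = w' (σ i) := by
  have hfiber : ∀ i, ∃ j, μ' j = μ i := fun i => by
    by_contra! h
    simpa [Finset.filter_false_of_mem fun j _ => h j, (hw i).ne] using hsum i
  choose σ hσ using hfiber
  have hσ_bij : Bijective σ := by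
    refine ⟨fun i i' h => hμ (by rw [← hσ i, ← hσ i', h]), fun j => ?_⟩
    obtain ⟨i, hi⟩ := hrange j
    exact ⟨i, hμ' (by rw [hσ i, hi])⟩
  refine ⟨Equiv.ofBijective σ hσ_bij, fun i => ⟨(hσ i).symm, ?_⟩⟩
  rw [← hsum i, ← hσ i]
  exact sum_eq_single_of_mem (σ i) (by simp) fun j hj hne => absurd (hμ' (mem_filter.1 hj).2) hne

lemma MeasureTheory.Measure.exists_measurableSet_measureReal_ne {Ω : Type*}
    [MeasurableSpace Ω] {μ ν : Measure Ω} [IsFiniteMeasure μ] [IsFiniteMeasure ν] (h : μ ≠ ν) :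
    ∃ A, MeasurableSet A ∧ μ.real A ≠ ν.real A := by
  contrapose! h
  exact Measure.ext fun A hA => (measureReal_eq_measureReal_iff).1 (h A hA)

lemma prod_finProdFinEquiv_symm_snd {M : Type*} [CommMonoid M] (a b : ℕ) (g : Fin b → M) :
    ∏ s : Fin (a * b), g (finProdFinEquiv.symm s).2 = (∏ t, g t) ^ a := by
  rw [Fintype.prod_equiv finProdFinEquiv.symm _ (fun p => g p.2) fun _ => rfl,
    Fintype.prod_prod_type]
  exact Fin.prod_const a (∏ t, g t)

namespace MeasureTheory

variable {Ω : Type*} [MeasurableSpace Ω]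

lemma exists_measurableSet_prod_sub_ne_zero {ι : Type*} [Fintype ι] (μ : ι → Measure Ω)
    [∀ t, IsFiniteMeasure (μ t)] (ν : Measure Ω) [IsFiniteMeasure ν] :
    ∃ (A : ι → Set Ω) (d : ι → ℝ), (∀ t, MeasurableSet (A t)) ∧
      ∏ t, (ν.real (A t) - d t) ≠ 0 ∧ ∀ t, μ t ≠ ν → ∏ s, ((μ t).real (A s) - d s) = 0 := by
  have h : ∀ t, ∃ A d, MeasurableSet A ∧ ν.real A ≠ d ∧ (μ t ≠ ν → (μ t).real A = d) := by
    intro t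
    by_cases ht : μ t = ν
    · exact ⟨∅, 1, .empty, by simp, fun h => absurd ht h⟩
    · obtain ⟨A, hA, hne⟩ := Measure.exists_measurableSet_measureReal_ne ht
      exact ⟨A, _, hA, hne.symm, fun _ => rfl⟩
  choose A d hA hν hμ using h
  exact ⟨A, d, hA, prod_ne_zero_iff.2 fun t _ => sub_ne_zero.2 (hν t),
    fun t ht => prod_eq_zero (mem_univ t) (sub_eq_zero.2 (hμ t ht))⟩

lemma integrable_prod_indicator_sub_const {ι : Type*} [Fintype ι] (μ : ι → Measure Ω)
    [∀ t, IsFiniteMeasure (μ t)] {B : ι → Set Ω} (hB : ∀ s, MeasurableSet (B s)) (c : ι → ℝ) :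
    Integrable (fun x : ι → Ω => ∏ s, ((B s).indicator (1 : Ω → ℝ) (x s) - c s)) (Measure.pi μ) :=
  .fintype_prod fun s => ((integrable_const (1 : ℝ)).indicator (hB s)).sub (integrable_const _)

lemma prod_measureReal_sub_eq_integral_pi {ι : Type*} [Fintype ι] (μ : Measure Ω)
    [IsProbabilityMeasure μ] {B : ι → Set Ω} (hB : ∀ s, MeasurableSet (B s)) (c : ι → ℝ) :
    ∏ s, (μ.real (B s) - c s) =
      ∫ x, ∏ s, ((B s).indicator (1 : Ω → ℝ) (x s) - c s) ∂Measure.pi fun _ => μ := by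
  rw [integral_fintype_prod_eq_prod fun s y => (B s).indicator (1 : Ω → ℝ) y - c s]
  refine prod_congr rfl fun s _ => ?_
  have hind : Integrable ((B s).indicator (1 : Ω → ℝ)) μ := (integrable_const 1).indicator (hB s)
  rw [integral_sub hind (integrable_const _),
    integral_indicator_one (hB s), integral_const, probReal_univ, one_smul]

end MeasureTheory

namespace MixtureOfMeasures

variable {Ω : Type*} [MeasurableSpace Ω]

lemma integral_V (Q : MixtureOfMeasures Ω) (n : ℕ) {F : (Fin n → Ω) → ℝ}
    (hF : ∀ i, Integrable F (Measure.pi fun _ => Q.μ i)) :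
    ∫ x, F x ∂Q.V n = ∑ i, Q.w i * ∫ x, F x ∂Measure.pi fun _ => Q.μ i := by
  rw [V, integral_finsetSum_measure fun i _ => (hF i).smul_measure ENNReal.ofReal_ne_top]
  refine sum_congr rfl fun i _ => ?_
  rw [integral_smul_measure, ENNReal.toReal_ofReal (Q.pos i).le, smul_eq_mul]

lemma sum_mul_prod_sub_eq_of_V_eq {P P' : MixtureOfMeasures Ω} {n : ℕ} (hV : P'.V n = P.V n)
    {B : Fin n → Set Ω} (hB : ∀ s, MeasurableSet (B s)) (c : Fin n → ℝ) :
    ∑ j, P'.w j * ∏ s, ((P'.μ j).real (B s) - c s) =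
      ∑ i, P.w i * ∏ s, ((P.μ i).real (B s) - c s) := by
  have := P.prob
  have := P'.prob
  simp only [prod_measureReal_sub_eq_integral_pi _ hB]
  rw [← integral_V, ← integral_V, hV] <;>
    exact fun i => integrable_prod_indicator_sub_const _ hB c

lemma sum_mul_sq_prod_sub_eq_of_V_eq {P P' : MixtureOfMeasures Ω} {k : ℕ}
    (hV : P'.V (2 * k) = P.V (2 * k)) {A : Fin k → Set Ω} (hA : ∀ t, MeasurableSet (A t))
    (d : Fin k → ℝ) :
    ∑ j, P'.w j * (∏ t, ((P'.μ j).real (A t) - d t)) ^ 2 =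
      ∑ i, P.w i * (∏ t, ((P.μ i).real (A t) - d t)) ^ 2 := by
  have h := sum_mul_prod_sub_eq_of_V_eq hV (fun s => hA (finProdFinEquiv.symm s).2)
    fun s => d (finProdFinEquiv.symm s).2
  simpa only [← prod_finProdFinEquiv_symm_snd 2 k] using h

lemma mem_range_of_V_eq {P P' : MixtureOfMeasures Ω} (hV : P'.V (2 * P.m) = P.V (2 * P.m))
    (j : Fin P'.m) : P'.μ j ∈ Set.range P.μ := by
  by_contra hj
  have := P.prob
  have := P'.prob j
  obtain ⟨A, d, hA, hne, hzero⟩ := exists_measurableSet_prod_sub_ne_zero P.μ (P'.μ j)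
  have hP : ∑ i, P.w i * (∏ t, ((P.μ i).real (A t) - d t)) ^ 2 = 0 :=
    sum_eq_zero fun i _ => by rw [hzero i fun h => hj ⟨i, h⟩]; ring
  have hP' : 0 < ∑ j, P'.w j * (∏ t, ((P'.μ j).real (A t) - d t)) ^ 2 :=
    sum_pos' (fun j _ => mul_nonneg (P'.pos j).le (sq_nonneg _))
      ⟨j, mem_univ j, mul_pos (P'.pos j) (pow_two_pos_of_ne_zero hne)⟩
  exact hP'.ne' ((sum_mul_sq_prod_sub_eq_of_V_eq hV hA d).trans hP)

lemma sum_weight_fiber_eq_of_V_eq [DecidableEq (Measure Ω)] {P P' : MixtureOfMeasures Ω}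
    (hV : P'.V (2 * P.m) = P.V (2 * P.m)) (i : Fin P.m) :
    ∑ j with P'.μ j = P.μ i, P'.w j = P.w i := by
  have := P.prob
  obtain ⟨A, d, hA, hne, hzero⟩ := exists_measurableSet_prod_sub_ne_zero P.μ (P.μ i)
  set q := (∏ t, ((P.μ i).real (A t) - d t)) ^ 2
  have hP : ∑ t, P.w t * (∏ s, ((P.μ t).real (A s) - d s)) ^ 2 = P.w i * q :=
    sum_eq_single i (fun t _ ht => by rw [hzero t (P.inj.ne ht)]; ring) (by simp)
  have hP' : ∑ j, P'.w j * (∏ s, ((P'.μ j).real (A s) - d s)) ^ 2 =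
      (∑ j with P'.μ j = P.μ i, P'.w j) * q := by
    rw [sum_filter, sum_mul]
    refine sum_congr rfl fun j _ => ?_
    split_ifs with hj
    · rw [hj]
    · obtain ⟨t, ht⟩ := mem_range_of_V_eq hV j
      rw [← ht, hzero t (ht ▸ hj)]
      ring
  exact mul_right_cancel₀ (pow_ne_zero 2 hne)
    (hP'.symm.trans ((sum_mul_sq_prod_sub_eq_of_V_eq hV hA d).trans hP))

end MixtureOfMeasures

/-- Any mixture of measures with `m` components is `2m`-determined. -/
theorem mixture_determined_two_m {Ω : Type*} [MeasurableSpace Ω]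
    (P P' : MixtureOfMeasures Ω)
    (hV : P'.V (2 * P.m) = P.V (2 * P.m)) :
    P'.Equal P := by
  classical
  exact exists_equiv_of_sum_fiber_eq P.inj P'.inj P.pos (MixtureOfMeasures.mem_range_of_V_eq hV)
    (MixtureOfMeasures.sum_weight_fiber_eq_of_V_eq hV)
end

section
/- Let (Ω, F) be a measurable space with F ≠ {∅, Ω}. For every m ≥ 2 there exists a mixture of measures with m components that is not (2m−2)-identifiable: that is, there exist two distinct mixtures of measures P ≠ P', each with exactly m components, such that V_{2m−2}(P) = V_{2m−2}(P'). -/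
open MeasureTheory

/-!
Pick `x ∈ S`, `y ∉ S` and put `N = 2m - 1`. For `r = 0, 1` let `P_r` give weight
`C(N, k) / 2^(N-1)` to the Bernoulli measure `Ber(x, y, k / N)` for each of the `m` indices
`k ≤ N` of parity `r`. The measure `V_n` of a mixture of Bernoulli measures on `{x, y}` is the
image of one on `Bool^n`, which is determined by its values on points, i.e. by the moments
`∑ w p^t (1 - p)^u` with `t + u = n`. For `n = N - 1` these moments agree for `P_0` and `P_1`:
`k^t (N - k)^u` is a polynomial in `k` of degree `< N`, so its `N`-th forward difference
`∑ₖ (-1)^k C(N, k) k^t (N - k)^u` vanishes. The parity of `k` keeps the components apart.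
-/

open Finset Polynomial MeasureTheory ProbabilityTheory unitInterval
open scoped ENNReal

theorem Finset.sum_range_two_mul_eq_add {M : Type*} [AddCommMonoid M] (f : ℕ → M) (m : ℕ) :
    ∑ k ∈ range (2 * m), f k = ∑ i ∈ range m, f (2 * i) + ∑ i ∈ range m, f (2 * i + 1) := by
  induction m with
  | zero => simp
  | succ m ih =>
    rw [show 2 * (m + 1) = 2 * m + 1 + 1 by ring, sum_range_succ, sum_range_succ, ih,
      sum_range_succ, sum_range_succ]
    abel

theorem Polynomial.sum_choose_even_mul_eval_eq_sum_choose_odd {R : Type*} [CommRing R] {m : ℕ}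
    {q : R[X]} (hq : q.natDegree < 2 * m - 1) :
    ∑ i ∈ range m, ((2 * m - 1).choose (2 * i) : R) * q.eval ((2 * i : ℕ) : R) =
      ∑ i ∈ range m, ((2 * m - 1).choose (2 * i + 1) : R) * q.eval ((2 * i + 1 : ℕ) : R) := by
  have h := congrFun (fwdDiff_iter_eq_zero_of_degree_lt hq) 0
  rw [fwdDiff_iter_eq_sum_shift, show 2 * m - 1 + 1 = 2 * m by omega,
    sum_range_two_mul_eq_add] at h
  have hodd : ∀ i ∈ range m, Odd (2 * m - 1 - 2 * i) := fun i hi =>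
    ⟨m - 1 - i, by have := mem_range.1 hi; omega⟩
  have heven : ∀ i ∈ range m, Even (2 * m - 1 - (2 * i + 1)) := fun i hi =>
    ⟨m - 1 - i, by have := mem_range.1 hi; omega⟩
  rw [sum_congr rfl fun i hi => by rw [(hodd i hi).neg_one_pow], add_comm,
    sum_congr rfl fun i hi => by rw [(heven i hi).neg_one_pow]] at h
  simp only [zsmul_eq_mul, Int.cast_neg, Int.cast_natCast, neg_mul,
    one_mul, zero_add, nsmul_one, sum_neg_distrib] at h
  exact (add_neg_eq_zero.1 h).symm

theorem Nat.sum_range_choose_two_mul_add {m r : ℕ} (hm : 0 < m) (hr : r < 2) :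
    ∑ i ∈ range m, (2 * m - 1).choose (2 * i + r) = 2 ^ (2 * m - 2) := by
  have hparity : ∑ i ∈ range m, (2 * m - 1).choose (2 * i) =
      ∑ i ∈ range m, (2 * m - 1).choose (2 * i + 1) := by
    have := sum_choose_even_mul_eval_eq_sum_choose_odd (R := ℤ) (q := 1) (m := m)
      (by rw [natDegree_one]; omega)
    simp only [eval_one, mul_one] at this
    exact_mod_cast this
  have htotal := Nat.sum_range_choose (2 * m - 1)
  rw [show 2 * m - 1 + 1 = 2 * m by omega, sum_range_two_mul_eq_add] at htotal
  have hpow : 2 ^ (2 * m - 1) = 2 ^ (2 * m - 2) * 2 := by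
    rw [← pow_succ]; congr 1; omega
  interval_cases r
  · simp only [add_zero]; omega
  · omega

section

variable {ι : Type*} [Fintype ι]

lemma pi_bernoulliMeasure_bool_singleton {n : ℕ} (p : I) (b : Fin n → Bool) :
    Measure.pi (fun _ : Fin n => Ber(true, false, p)) {b} =
      ENNReal.ofReal (p ^ #{j | b j} * (1 - p) ^ #{j | ¬ b j}) := by
  have hBer : ∀ j,
      Ber(true, false, p) {b j} = ENNReal.ofReal (if b j then (p : ℝ) else 1 - p) := by
    intro j
    cases b j <;> simp [← ENNReal.ofReal_coe_nnreal, coe_symm_eq]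
  rw [Measure.pi_singleton, prod_congr rfl fun j _ => hBer j, ← ENNReal.ofReal_prod_of_nonneg,
    prod_ite, prod_const, prod_const]
  intro j _
  split_ifs
  exacts [nonneg p, one_minus_nonneg p]

lemma sum_smul_pi_bernoulliMeasure_bool_singleton {n : ℕ} {w : ι → ℝ} (hw : ∀ i, 0 ≤ w i)
    (p : ι → I) (b : Fin n → Bool) :
    (∑ i, ENNReal.ofReal (w i) • Measure.pi (fun _ : Fin n => Ber(true, false, p i))) {b} =
      ENNReal.ofReal (∑ i, w i * (p i ^ #{j | b j} * (1 - p i) ^ #{j | ¬ b j})) := by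
  rw [Measure.finsetSum_apply, ENNReal.ofReal_sum_of_nonneg fun i _ => mul_nonneg (hw i)
    (mul_nonneg (pow_nonneg (nonneg _) _) (pow_nonneg (one_minus_nonneg _) _))]
  refine sum_congr rfl fun i _ => ?_
  rw [Measure.smul_apply, pi_bernoulliMeasure_bool_singleton, smul_eq_mul,
    ENNReal.ofReal_mul (hw i)]

lemma sum_smul_pi_bernoulliMeasure_eq_map {Ω : Type*} [MeasurableSpace Ω] (x y : Ω)
    (c : ι → ℝ≥0∞) (p : ι → I) (n : ℕ) :
    ∑ i, c i • Measure.pi (fun _ : Fin n => Ber(x, y, p i)) =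
      (∑ i, c i • Measure.pi (fun _ : Fin n => Ber(true, false, p i))).map
        (fun b j => cond (b j) x y) := by
  have hf : Measurable fun b : Bool => cond b x y := measurable_of_countable _
  have hF : Measurable fun (b : Fin n → Bool) j => cond (b j) x y :=
    measurable_pi_lambda _ fun j => hf.comp (measurable_pi_apply j)
  rw [Measure.map_finset_sum' hF.aemeasurable]
  refine sum_congr rfl fun i _ => ?_
  rw [Measure.map_smul, Measure.pi_map_pi (fun _ => hf.aemeasurable)]
  simp_rw [map_bernoulliMeasure' _ _ hf]
  rfl

theorem sum_smul_pi_bernoulliMeasure_eq_of_moments {Ω : Type*} [MeasurableSpace Ω] (x y : Ω)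
    {ι' : Type*} [Fintype ι'] {n : ℕ} {w : ι → ℝ} {p : ι → I} {w' : ι' → ℝ} {p' : ι' → I}
    (hw : ∀ i, 0 ≤ w i) (hw' : ∀ i, 0 ≤ w' i)
    (hmoment : ∀ t u, t + u = n →
      ∑ i, w i * (p i ^ t * (1 - p i) ^ u) = ∑ i, w' i * (p' i ^ t * (1 - p' i) ^ u)) :
    ∑ i, ENNReal.ofReal (w i) • Measure.pi (fun _ : Fin n => Ber(x, y, p i)) =
      ∑ i, ENNReal.ofReal (w' i) • Measure.pi (fun _ : Fin n => Ber(x, y, p' i)) := by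
  rw [sum_smul_pi_bernoulliMeasure_eq_map x y, sum_smul_pi_bernoulliMeasure_eq_map x y]
  refine congrArg (Measure.map _) (Measure.ext_iff_singleton.2 fun b => ?_)
  have hcard : #{j | b j} + #{j | ¬ b j} = n := by
    simpa using card_filter_add_card_filter_not (s := univ) fun j => b j = true
  rw [sum_smul_pi_bernoulliMeasure_bool_singleton hw,
    sum_smul_pi_bernoulliMeasure_bool_singleton hw', hmoment _ _ hcard]

end

lemma bernoulliMeasure_injective {Ω : Type*} [MeasurableSpace Ω] {S : Set Ω}
    (hS : MeasurableSet S) {x y : Ω} (hx : x ∈ S) (hy : y ∉ S) :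
    Function.Injective fun p : I => Ber(x, y, p) := by
  intro p q hpq
  have h := congrArg (fun μ : Measure Ω => μ S) hpq
  simp only [bernoulliMeasure_apply_of_mem_of_notMem _ hS hx hy, ENNReal.coe_inj] at h
  exact Subtype.ext (congrArg NNReal.toReal h)

noncomputable def parityParam (m r : ℕ) (hr : r < 2) (i : Fin m) : I :=
  ⟨(2 * i + r : ℕ) / (2 * m - 1 : ℕ),
    div_mem (Nat.cast_nonneg _) (Nat.cast_nonneg _) (Nat.cast_le.2 (by omega))⟩

lemma two_mul_add_eq_of_parityParam_eq {m r r' : ℕ} {hr : r < 2} {hr' : r' < 2} {i j : Fin m}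
    (h : parityParam m r hr i = parityParam m r' hr' j) : 2 * (i : ℕ) + r = 2 * j + r' := by
  have hN : ((2 * m - 1 : ℕ) : ℝ) ≠ 0 := Nat.cast_ne_zero.2 (by have := i.2; omega)
  exact_mod_cast (div_left_inj' hN).1 (congrArg Subtype.val h)

noncomputable def parityWeight (m r : ℕ) (i : Fin m) : ℝ :=
  (2 * m - 1).choose (2 * i + r) / 2 ^ (2 * m - 2)

lemma parityWeight_pos {m r : ℕ} (hr : r < 2) (i : Fin m) : 0 < parityWeight m r i :=
  div_pos (Nat.cast_pos.2 (Nat.choose_pos (by omega))) (by positivity)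

lemma sum_parityWeight {m r : ℕ} (hm : 0 < m) (hr : r < 2) : ∑ i, parityWeight m r i = 1 := by
  simp only [parityWeight]
  rw [← sum_div, ← sum_range fun i => ((2 * m - 1).choose (2 * i + r) : ℝ), ← Nat.cast_sum,
    Nat.sum_range_choose_two_mul_add hm hr]
  simp

lemma sum_parityWeight_mul_moment {m : ℕ} (hm : 0 < m) {r : ℕ} (hr : r < 2) (t u : ℕ) :
    ∑ i, parityWeight m r i * (parityParam m r hr i ^ t * (1 - parityParam m r hr i) ^ u) =
      (∑ i ∈ range m, ((2 * m - 1).choose (2 * i + r) : ℝ) *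
          (X ^ t * (C ((2 * m - 1 : ℕ) : ℝ) - X) ^ u).eval ((2 * i + r : ℕ) : ℝ)) /
        (2 ^ (2 * m - 2) * (2 * m - 1 : ℕ) ^ (t + u)) := by
  have hN : ((2 * m - 1 : ℕ) : ℝ) ≠ 0 := Nat.cast_ne_zero.2 (by omega)
  rw [sum_range, sum_div]
  refine sum_congr rfl fun i _ => ?_
  simp only [parityWeight, parityParam, eval_mul, eval_pow, eval_X, eval_sub, eval_C,
    one_sub_div hN, div_pow, pow_add]
  field_simp

namespace MixtureOfMeasures

variable {Ω : Type*} [MeasurableSpace Ω] {x y : Ω}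

noncomputable def parityBinomial (hxy : Function.Injective fun p : I => Ber(x, y, p)) (m : ℕ)
    (hm : 0 < m) (r : ℕ) (hr : r < 2) : MixtureOfMeasures Ω where
  m := m
  w := parityWeight m r
  μ i := Ber(x, y, parityParam m r hr i)
  prob _ := inferInstance
  pos := parityWeight_pos hr
  sum_one := sum_parityWeight hm hr
  inj := hxy.comp fun i j h => Fin.ext (by have := two_mul_add_eq_of_parityParam_eq h; omega)

end MixtureOfMeasures

lemma sum_parityWeight_mul_moment_even_eq_odd {m : ℕ} (hm : 0 < m) {t u : ℕ}
    (htu : t + u = 2 * m - 2) :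
    ∑ i, parityWeight m 0 i *
        (parityParam m 0 two_pos i ^ t * (1 - parityParam m 0 two_pos i) ^ u) =
      ∑ i, parityWeight m 1 i *
        (parityParam m 1 one_lt_two i ^ t * (1 - parityParam m 1 one_lt_two i) ^ u) := by
  rw [sum_parityWeight_mul_moment hm, sum_parityWeight_mul_moment hm]
  congr 1
  simp only [add_zero]
  have hdeg : natDegree (X ^ t * (C ((2 * m - 1 : ℕ) : ℝ) - X) ^ u) ≤ t + u := by
    compute_degree
  exact sum_choose_even_mul_eval_eq_sum_choose_odd (by omega)

/-- On any measurable space with a nontrivial σ-algebra, for every `m ≥ 2` there is a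
mixture of measures with `m` components that is not `(2m-2)`-identifiable: there are two
distinct mixtures, each with exactly `m` components, with the same `V_{2m-2}`. -/
theorem exists_mixture_not_identifiable {Ω : Type*} [MeasurableSpace Ω]
    (hF : ∃ S : Set Ω, MeasurableSet S ∧ S ≠ ∅ ∧ S ≠ Set.univ)
    (m : ℕ) (hm : 2 ≤ m) :
    ∃ P P' : MixtureOfMeasures Ω, P.m = m ∧ P'.m = m ∧ ¬ P'.Equal P ∧
      P'.V (2 * m - 2) = P.V (2 * m - 2) := by
  obtain ⟨S, hS, hS_ne, hS_univ⟩ := hF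
  obtain ⟨x, hx⟩ := Set.nonempty_iff_ne_empty.2 hS_ne
  obtain ⟨y, hy⟩ := (Set.ne_univ_iff_exists_notMem S).1 hS_univ
  have hxy := bernoulliMeasure_injective hS hx hy
  have hm₀ : 0 < m := by omega
  refine ⟨.parityBinomial hxy m hm₀ 0 two_pos, .parityBinomial hxy m hm₀ 1 one_lt_two,
    rfl, rfl, ?_, ?_⟩
  · rintro ⟨e, he⟩
    have := two_mul_add_eq_of_parityParam_eq (hxy (he ⟨0, hm₀⟩).1)
    omega
  · exact (sum_smul_pi_bernoulliMeasure_eq_of_moments x y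
      (fun i => (parityWeight_pos two_pos i).le) (fun i => (parityWeight_pos one_lt_two i).le)
      fun _ _ htu => sum_parityWeight_mul_moment_even_eq_odd hm₀ htu).symm
end

section
/- If P = Σ_{i=1}^m w_i δ_{μ_i} is a mixture of measures whose components μ_1, ..., μ_m are linearly independent (as elements of the vector space of finite signed measures), then P is 3-identifiable: any mixture of measures P' of order at most m with Σ_i w_i μ_i^{×3} = V_3(P') must equal P. -/
open MeasureTheory

/-!
Identify each component `μ i` with the function `f i : A ↦ μ i A` on sets. Then `V 3` evaluated
on boxes `A × B × C` is the symmetric tensor `∑ i, w i f i(A) f i(B) f i(C)`. Contracting two of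
its slots against finitely supported signed weights `c i` dual to the linearly independent `f i`
gives `∑ j, w' j ⟨c i, g j⟩ ⟨c k, g j⟩ g j = δ_{ik} w i f i` for the second mixture, where
`⟨c, h⟩ = ∑ a, c a * h a` is `linearCombination K h c`. The diagonal puts every `f i` in the
span of the `g j`; as there are at most as many `g j`, they are linearly independent with the
same span. The off-diagonal then leaves each `g j` with a single nonzero coordinate in the basis
`f`, and the normalisation `μ(Ω) = 1` makes `g j` equal to that `f i`, with the same weight.
-/

open Finsupp Submodule Set Function

section ThirdMoment

variable {R α ι : Type*} [CommSemiring R] [Fintype ι]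

def thirdMoment (w : ι → R) (f : ι → α → R) (a b x : α) : R :=
  ∑ i, w i * f i a * f i b * f i x

theorem thirdMoment_contract (w : ι → R) (f : ι → α → R) (c d : α →₀ R) :
    linearCombination R (fun a => linearCombination R (fun b => thirdMoment w f a b) d) c
      = ∑ i, (w i * linearCombination R (f i) c * linearCombination R (f i) d) • f i := by
  induction c using Finsupp.induction_linear with
  | zero => simp
  | add c₁ c₂ h₁ h₂ =>
    simp only [map_add, h₁, h₂, add_mul, mul_add, add_smul, Finset.sum_add_distrib]
  | single a r =>
    simp only [linearCombination_single]
    induction d using Finsupp.induction_linear with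
    | zero => simp
    | add d₁ d₂ h₁ h₂ =>
      simp only [map_add, smul_add, h₁, h₂, mul_add, add_smul, Finset.sum_add_distrib]
    | single b s =>
      ext x
      simp only [thirdMoment, linearCombination_single, Pi.smul_apply, Finset.sum_apply,
        smul_eq_mul, Finset.mul_sum]
      exact Finset.sum_congr rfl fun i _ => by ring

theorem linearCombination_sum_smul (t : ι → R) (f : ι → α → R) (c : α →₀ R) :
    linearCombination R (∑ k, t k • f k) c = ∑ k, t k * linearCombination R (f k) c := by
  change llift R R R α _ _ = _
  simp only [map_sum, map_smul, LinearMap.sum_apply, LinearMap.smul_apply, smul_eq_mul]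
  rfl

theorem eq_sum_smul_of_mem_span [DecidableEq ι] {f : ι → α → R} {c : ι → α →₀ R}
    (hc : ∀ i k, linearCombination R (f k) (c i) = if i = k then 1 else 0) {h : α → R}
    (hh : h ∈ span R (range f)) : h = ∑ i, linearCombination R h (c i) • f i := by
  obtain ⟨t, rfl⟩ := (mem_span_range_iff_exists_fun R).mp hh
  simp [linearCombination_sum_smul, hc]

end ThirdMoment

section Field

variable {K α ι κ V : Type*} [Field K] [Fintype ι] [Fintype κ] [AddCommGroup V] [Module K V]

theorem LinearIndependent.exists_finsupp_dual [DecidableEq ι] {f : ι → α → K}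
    (hf : LinearIndependent K f) :
    ∃ c : ι → α →₀ K, ∀ i k, linearCombination K (f k) (c i) = if i = k then 1 else 0 := by
  let B : (ι → K) →ₗ[K] (α →₀ K) →ₗ[K] K :=
    (llift K K K α).toLinearMap ∘ₗ Fintype.linearCombination K f
  have hB : Surjective B.flip := by
    rw [← LinearMap.flip_injective_iff₂, LinearMap.flip_flip]
    exact (llift K K K α).injective.comp
      (linearIndependent_iff_injective_fintypeLinearCombination.mp hf)
  choose c hc using fun i => hB (LinearMap.proj i)
  refine ⟨c, fun i k => ?_⟩
  simpa [B, linearCombination_apply, Pi.single_apply, eq_comm] using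
    LinearMap.congr_fun (hc i) (Pi.single k 1)

theorem LinearIndependent.linearIndependent_and_span_eq {f : ι → V} {g : κ → V}
    (hf : LinearIndependent K f) (hfg : ∀ i, f i ∈ span K (range g))
    (hcard : Fintype.card κ ≤ Fintype.card ι) :
    LinearIndependent K g ∧ span K (range f) = span K (range g) := by
  have := FiniteDimensional.span_of_finite K (finite_range g)
  have hle : span K (range f) ≤ span K (range g) := span_le.mpr (range_subset_iff.mpr hfg)
  have hι : Fintype.card ι ≤ (range g).finrank K :=
    finrank_span_eq_card hf ▸ Submodule.finrank_mono hle
  have hg : LinearIndependent K g :=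
    linearIndependent_iff_card_le_finrank_span.mpr (hcard.trans hι)
  refine ⟨hg, eq_of_le_of_finrank_eq hle ?_⟩
  rw [finrank_span_eq_card hf, finrank_span_eq_card hg]
  exact le_antisymm (finrank_span_eq_card hg ▸ hι) hcard

theorem exists_eq_of_eq_sum_smul {f : ι → α → K} {h : α → K} {t : ι → K}
    (hh : h = ∑ i, t i • f i) (ht : ∀ i k, i ≠ k → t i * t k = 0) {a₀ : α}
    (hf₁ : ∀ i, f i a₀ = 1) (hh₁ : h a₀ = 1) : ∃ i, h = f i := by
  have hsum : ∑ i, t i = 1 := by simpa [hh₁, hf₁] using (congrFun hh a₀).symm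
  obtain ⟨i, -, hi⟩ := Finset.exists_ne_zero_of_sum_ne_zero (hsum ▸ one_ne_zero)
  have hhi : h = t i • f i := hh.trans <| Finset.sum_eq_single i
    (fun k _ hk => by rw [(mul_eq_zero.mp (ht i k (Ne.symm hk))).resolve_left hi, zero_smul])
    (by simp)
  have hti : t i = 1 := by simpa [hh₁, hf₁] using (congrFun hhi a₀).symm
  exact ⟨i, by rw [hhi, hti, one_smul]⟩

theorem exists_equiv_of_thirdMoment_eq {w : ι → K} {w' : κ → K} {f : ι → α → K}
    {g : κ → α → K} (hw : ∀ i, w i ≠ 0) (hw' : ∀ j, w' j ≠ 0) (hf : LinearIndependent K f)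
    (hcard : Fintype.card κ ≤ Fintype.card ι) {a₀ : α} (hf₁ : ∀ i, f i a₀ = 1)
    (hg₁ : ∀ j, g j a₀ = 1) (hM : thirdMoment w' g = thirdMoment w f) :
    ∃ e : κ ≃ ι, ∀ j, g j = f (e j) ∧ w' j = w (e j) := by
  classical
  obtain ⟨c, hc⟩ := hf.exists_finsupp_dual
  set p : ι → κ → K := fun i j => linearCombination K (g j) (c i)
  have hcontr : ∀ i k, ∑ j, (w' j * p i j * p k j) • g j = if i = k then w i • f i else 0 := by
    intro i k
    rw [← thirdMoment_contract, hM, thirdMoment_contract]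
    by_cases hik : i = k <;> simp [hc, hik]
  have hfg : ∀ i, f i ∈ span K (range g) := by
    intro i
    have hii := hcontr i i
    rw [if_pos rfl] at hii
    rw [← inv_smul_smul₀ (hw i) (f i), ← hii]
    exact smul_mem _ _ (sum_mem fun j _ => smul_mem _ _ (subset_span (mem_range_self j)))
  obtain ⟨hg, hspan⟩ := hf.linearIndependent_and_span_eq hfg hcard
  have hoff : ∀ j i k, i ≠ k → p i j * p k j = 0 := by
    intro j i k hik
    have := Fintype.linearIndependent_iff.mp hg _ ((hcontr i k).trans (if_neg hik)) j
    simpa [mul_assoc, hw' j] using this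
  choose τ hτ using fun j => exists_eq_of_eq_sum_smul
    (eq_sum_smul_of_mem_span hc (hspan ▸ subset_span (mem_range_self j))) (hoff j) hf₁ (hg₁ j)
  obtain rfl : g = f ∘ τ := funext hτ
  have hτinj : Injective τ := hg.injective.of_comp
  have hcard' : Fintype.card κ = Fintype.card ι := by
    rw [← finrank_span_eq_card hg, ← finrank_span_eq_card hf, hspan]
  refine ⟨.ofBijective τ ((Fintype.bijective_iff_injective_and_card τ).mpr ⟨hτinj, hcard'⟩),
    fun j => ⟨rfl, ?_⟩⟩
  simpa [p, hc, hτinj.eq_iff, hf₁, ite_apply] using congrFun (hcontr (τ j) (τ j)) a₀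

end Field

theorem MeasureTheory.Measure.ext_of_real_eq {Ω : Type*} [MeasurableSpace Ω] {μ ν : Measure Ω}
    [IsFiniteMeasure μ] [IsFiniteMeasure ν] (h : μ.real = ν.real) : μ = ν :=
  Measure.ext fun s _ =>
    (measureReal_eq_measureReal_iff (measure_ne_top _ _) (measure_ne_top _ _)).mp (congrFun h s)

namespace MixtureOfMeasures

variable {Ω : Type*} [MeasurableSpace Ω]

instance (P : MixtureOfMeasures Ω) (i : Fin P.m) : IsProbabilityMeasure (P.μ i) := P.prob i

theorem real_V_three_pi (P : MixtureOfMeasures Ω) (A B C : Set Ω) :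
    (P.V 3).real (univ.pi ![A, B, C]) = thirdMoment P.w (fun i => (P.μ i).real) A B C := by
  simp only [measureReal_def, V, Measure.coe_finsetSum, Finset.sum_apply, Measure.smul_apply,
    smul_eq_mul]
  rw [ENNReal.toReal_sum fun i _ => ENNReal.mul_ne_top ENNReal.ofReal_ne_top (measure_ne_top _ _)]
  simp [thirdMoment, Measure.pi_pi, Fin.prod_univ_three, ENNReal.toReal_mul, (P.pos _).le,
    measureReal_def, mul_assoc]

end MixtureOfMeasures

/-- A mixture of measures with linearly independent components (as elements of the space of
finite signed measures) is `3`-identifiable. -/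
theorem mixture_linearIndependent_identifiable_three {Ω : Type*} [MeasurableSpace Ω]
    (P : MixtureOfMeasures Ω)
    (hli : ∀ c : Fin P.m → ℝ,
      (∀ A : Set Ω, MeasurableSet A → ∑ i, c i * (P.μ i A).toReal = 0) → c = 0)
    (P' : MixtureOfMeasures Ω) (hord : P'.m ≤ P.m)
    (hV : P'.V 3 = P.V 3) :
    P'.Equal P := by
  have hf : LinearIndependent ℝ fun i => (P.μ i).real :=
    Fintype.linearIndependent_iff.mpr fun c hc =>
      congrFun (hli c fun A _ => by simpa [measureReal_def] using congrFun hc A)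
  have hM : thirdMoment P'.w (fun j => (P'.μ j).real)
      = thirdMoment P.w (fun i => (P.μ i).real) := by
    ext A B C
    rw [← MixtureOfMeasures.real_V_three_pi, ← MixtureOfMeasures.real_V_three_pi, hV]
  obtain ⟨e, he⟩ := exists_equiv_of_thirdMoment_eq (fun i => (P.pos i).ne')
    (fun j => (P'.pos j).ne') hf (by simpa using hord) (fun _ => probReal_univ)
    (fun _ => probReal_univ) hM
  refine ⟨e.symm, fun i => ?_⟩
  obtain ⟨hμ, hw⟩ := e.apply_symm_apply i ▸ he (e.symm i)
  exact ⟨(Measure.ext_of_real_eq hμ).symm, hw.symm⟩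
end

section
/- If P = Σ_{i=1}^m w_i δ_{μ_i} is a mixture of measures whose components μ_1, ..., μ_m are jointly irreducible, then P is 2-determined: any mixture of measures P' of any order with Σ_i w_i μ_i^{×2} = V_2(P') must equal P. -/
open MeasureTheory

/-!
Write `f i A = μ i A` and `g j A = μ' j A`. Evaluated on rectangles `A ×ˢ B`, the identity
`V₂(P') = V₂(P)` reads `∑ j, w' j • g j ⊗ g j = ∑ i, w i • f i ⊗ f i`. Since `w' > 0`, a linear
functional vanishing on every `f i` vanishes on every `g j`, so `g j = ∑ i, C j i • f i`.
Joint irreducibility makes the rows of `C` stochastic and the `f i` linearly independent, so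
comparing coefficients gives `Cᵀ * diagonal w' * C = diagonal w`. Off the diagonal this is a
vanishing sum of nonnegative terms `w' j * C j i * C j k`, hence every row of `C` is a unit vector
`Pi.single (σ j) 1`: each `μ' j` is `μ (σ j)`, and the diagonal entries match the weights.
-/
open Matrix

section LinearAlgebra

variable {R α ι κ : Type*} [CommRing R] [Fintype ι] [Fintype κ] {f : ι → α → R}

theorem LinearIndependent.eq_of_forall_sum_mul_eq (hf : LinearIndependent R f) {c d : ι → R}
    (h : ∀ a, ∑ i, c i * f i a = ∑ i, d i * f i a) : c = d := by
  funext i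
  refine Fintype.linearIndependent_iffₛ.mp hf c d ?_ i
  ext a
  simpa only [Finset.sum_apply, Pi.smul_apply, smul_eq_mul] using h a

theorem LinearIndependent.eq_of_forall_sum_sum_mul_eq (hf : LinearIndependent R f)
    {M N : Matrix ι ι R}
    (h : ∀ a b, ∑ i, ∑ k, M i k * (f i a * f k b) = ∑ i, ∑ k, N i k * (f i a * f k b)) :
    M = N := by
  have hrow : ∀ b, (fun i => ∑ k, M i k * f k b) = fun i => ∑ k, N i k * f k b := fun b =>
    hf.eq_of_forall_sum_mul_eq fun a => by
      simpa only [Finset.mul_sum, Finset.sum_mul, mul_comm, mul_left_comm, mul_assoc] using h a b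
  exact funext fun i => hf.eq_of_forall_sum_mul_eq fun b => congrFun (hrow b) i

theorem LinearIndependent.transpose_mul_diagonal_mul_eq_diagonal [DecidableEq ι]
    [DecidableEq κ] (hf : LinearIndependent R f) {C : Matrix κ ι R} {w' : κ → R} {w : ι → R}
    (h : ∀ a b, ∑ j, w' j * ((∑ i, C j i * f i a) * (∑ i, C j i * f i b)) =
      ∑ i, w i * (f i a * f i b)) :
    Cᵀ * diagonal w' * C = diagonal w := by
  refine hf.eq_of_forall_sum_sum_mul_eq fun a b => ?_
  simp only [mul_apply, transpose_apply, diagonal_apply, mul_ite, mul_zero, ite_mul, zero_mul,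
    Finset.sum_ite_eq', Finset.mem_univ, if_true, Finset.sum_ite_eq]
  rw [← h a b]
  simp only [Finset.sum_mul_sum]
  simp only [Finset.mul_sum, Finset.sum_mul]
  rw [Finset.sum_comm_cycle]
  exact Finset.sum_congr rfl fun j _ => Finset.sum_congr rfl fun i _ =>
    Finset.sum_congr rfl fun k _ => by ring

end LinearAlgebra

theorem exists_eq_single_of_sum_eq_one_of_mul_eq_zero {ι R : Type*} [Fintype ι] [DecidableEq ι]
    [Semiring R] [NoZeroDivisors R] [Nontrivial R] {v : ι → R} (h1 : ∑ i, v i = 1)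
    (h0 : ∀ i k, i ≠ k → v i * v k = 0) : ∃ i, v = Pi.single i 1 := by
  obtain ⟨i, hi⟩ : ∃ i, v i ≠ 0 := by
    by_contra! h
    simp [h] at h1
  have hk : ∀ k, k ≠ i → v k = 0 := fun k hk => (mul_eq_zero.1 (h0 i k hk.symm)).resolve_left hi
  refine ⟨i, funext fun k => ?_⟩
  rcases eq_or_ne k i with rfl | hki
  · rw [Pi.single_eq_same, ← h1, Finset.sum_eq_single k (fun k' _ => hk k') (by simp)]
  · rw [Pi.single_eq_of_ne hki, hk k hki]

section OrderedField

variable {𝕜 α ι κ : Type*} [Field 𝕜] [LinearOrder 𝕜] [IsStrictOrderedRing 𝕜]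
  [Fintype ι] [Fintype κ]

theorem mem_span_range_of_sum_mul_mul_eq {f : ι → α → 𝕜} {g : κ → α → 𝕜} {w : ι → 𝕜}
    {w' : κ → 𝕜} (hw' : ∀ j, 0 < w' j)
    (h : ∀ a b, ∑ j, w' j * (g j a * g j b) = ∑ i, w i * (f i a * f i b)) (j : κ) :
    g j ∈ Submodule.span 𝕜 (Set.range f) := by
  by_contra hj
  obtain ⟨φ, hφj, hφf⟩ := Submodule.exists_dual_map_eq_bot_of_notMem hj inferInstance
  have hφf' : ∀ i, φ (f i) = 0 := fun i => by
    have := Submodule.mem_map_of_mem (f := φ)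
      (Submodule.subset_span (Set.mem_range_self (f := f) i))
    rwa [hφf, Submodule.mem_bot] at this
  have hslice : ∀ a, ∑ j, (w' j * g j a) • g j = ∑ i, (w i * f i a) • f i := fun a =>
    funext fun b => by
      simpa only [Finset.sum_apply, Pi.smul_apply, smul_eq_mul, mul_assoc] using h a b
  -- Applying `φ` in the second variable, then in the first, leaves `∑ j, w' j * φ (g j) ^ 2 = 0`.
  have hcol : ∑ j, (w' j * φ (g j)) • g j = 0 := funext fun a => by
    simpa [map_sum, hφf', Finset.sum_apply, mul_comm, mul_left_comm, mul_assoc]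
      using congrArg φ (hslice a)
  have hsq : ∑ j, w' j * φ (g j) ^ 2 = 0 := by
    simpa [map_sum, sq, mul_assoc] using congrArg φ hcol
  have := (Finset.sum_eq_zero_iff_of_nonneg fun j _ => by have := hw' j; positivity).1 hsq j
    (Finset.mem_univ j)
  exact hφj (pow_eq_zero_iff two_ne_zero |>.1 ((mul_eq_zero.1 this).resolve_left (hw' j).ne'))

theorem exists_eq_single_of_transpose_mul_diagonal_mul_eq_diagonal [DecidableEq ι]
    [DecidableEq κ] {C : Matrix κ ι 𝕜} (hC0 : ∀ j i, 0 ≤ C j i) (hC1 : ∀ j, ∑ i, C j i = 1)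
    {w' : κ → 𝕜} (hw' : ∀ j, 0 < w' j) {w : ι → 𝕜} (h : Cᵀ * diagonal w' * C = diagonal w) :
    ∃ σ : κ → ι, (∀ j, C j = Pi.single (σ j) 1) ∧ ∀ i, ∑ j with σ j = i, w' j = w i := by
  have hentry : ∀ i k, ∑ j, w' j * (C j i * C j k) = diagonal w i k := fun i k => by
    rw [← h, mul_apply]
    simp only [mul_diagonal, transpose_apply]
    exact Finset.sum_congr rfl fun j _ => by ring
  have hdisj : ∀ j i k, i ≠ k → C j i * C j k = 0 := fun j i k hik => by
    have hsum := hentry i k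
    rw [diagonal_apply_ne _ hik] at hsum
    have := (Finset.sum_eq_zero_iff_of_nonneg fun j _ =>
      mul_nonneg (hw' j).le (mul_nonneg (hC0 j i) (hC0 j k))).1 hsum j (Finset.mem_univ j)
    exact (mul_eq_zero.1 this).resolve_left (hw' j).ne'
  choose σ hσ using fun j => exists_eq_single_of_sum_eq_one_of_mul_eq_zero (hC1 j) (hdisj j)
  refine ⟨σ, hσ, fun i => ?_⟩
  rw [← diagonal_apply_eq w i, ← hentry i i, Finset.sum_filter]
  refine Finset.sum_congr rfl fun j _ => ?_
  rw [hσ j]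
  by_cases hj : σ j = i <;> simp [hj]

end OrderedField

section Fibers

variable {ι κ M : Type*} [Fintype κ] [DecidableEq ι] [AddCommMonoid M] {σ : κ → ι}

theorem Function.Injective.sum_fiber_apply (hσ : σ.Injective) (v : κ → M) (j : κ) :
    ∑ j' with σ j' = σ j, v j' = v j := by
  refine Finset.sum_eq_single_of_mem j (by simp) fun j' hj' hne => ?_
  exact absurd (hσ (Finset.mem_filter.1 hj').2) hne

theorem Function.surjective_of_sum_fiber_ne_zero {v : κ → M}
    (h : ∀ i, ∑ j with σ j = i, v j ≠ 0) : σ.Surjective := fun i => by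
  by_contra! hi
  exact h i (Finset.sum_eq_zero fun j hj => absurd (Finset.mem_filter.1 hj).2 (hi j))

end Fibers

section Measures

variable {Ω ι : Type*} [MeasurableSpace Ω] [Fintype ι]

def JointlyIrreducible (μ : ι → Measure Ω) : Prop :=
  ∀ (c : ι → ℝ) (ρ : Measure Ω), IsProbabilityMeasure ρ →
    (∀ A : Set Ω, MeasurableSet A → (ρ A).toReal = ∑ i, c i * (μ i A).toReal) → ∀ i, 0 ≤ c i

theorem JointlyIrreducible.linearIndependent {μ : ι → Measure Ω}
    [∀ i, IsProbabilityMeasure (μ i)] (h : JointlyIrreducible μ) :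
    LinearIndependent ℝ fun i (A : Set Ω) => (μ i A).toReal := by
  classical
  refine Fintype.linearIndependent_iff.2 fun c hc i₀ => ?_
  by_contra hi₀
  have hc' : ∀ A : Set Ω, ∑ i, c i * (μ i A).toReal = 0 := fun A => by
    simpa only [Finset.sum_apply, Pi.smul_apply, smul_eq_mul, Pi.zero_apply] using congrFun hc A
  -- `μ i₀ = ∑ i, (δ i i₀ - (2 / c i₀) c i) μ i` has coefficient `-1` at `i₀`.
  have := h (Pi.single i₀ 1 - (2 / c i₀) • c) (μ i₀) inferInstance (fun A _ => by
    simp [sub_mul, Finset.sum_sub_distrib, mul_assoc, ← Finset.mul_sum, hc' A,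
      Pi.single_apply]) i₀
  simp [div_mul_cancel₀ _ hi₀] at this

end Measures

namespace MixtureOfMeasures

variable {Ω : Type*} [MeasurableSpace Ω]

theorem Equal.symm {P P' : MixtureOfMeasures Ω} (h : P.Equal P') : P'.Equal P := by
  obtain ⟨σ, hσ⟩ := h
  refine ⟨σ.symm, fun i => ?_⟩
  obtain ⟨hμ, hw⟩ := hσ (σ.symm i)
  rw [σ.apply_symm_apply] at hμ hw
  exact ⟨hμ.symm, hw.symm⟩

theorem V_two_pi_toReal (P : MixtureOfMeasures Ω) (A B : Set Ω) :
    (P.V 2 (Set.univ.pi ![A, B])).toReal =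
      ∑ i, P.w i * ((P.μ i A).toReal * (P.μ i B).toReal) := by
  have := P.prob
  rw [V, Measure.finsetSum_apply, ENNReal.toReal_sum fun i _ => by
    rw [Measure.smul_apply, smul_eq_mul]
    exact ENNReal.mul_ne_top ENNReal.ofReal_ne_top (measure_ne_top _ _)]
  refine Finset.sum_congr rfl fun i _ => ?_
  simp [Measure.pi_pi, Fin.prod_univ_two, ENNReal.toReal_ofReal (P.pos i).le]

end MixtureOfMeasures

/-- A mixture of measures with jointly irreducible components is `2`-determined.
Joint irreducibility: whenever a real linear combination of the components is itself a
probability measure, all coefficients are nonnegative. -/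
theorem mixture_jointlyIrreducible_determined_two {Ω : Type*} [MeasurableSpace Ω]
    (P : MixtureOfMeasures Ω)
    (hji : ∀ (c : Fin P.m → ℝ) (ρ : Measure Ω), IsProbabilityMeasure ρ →
      (∀ A : Set Ω, MeasurableSet A → (ρ A).toReal = ∑ i, c i * (P.μ i A).toReal) →
      ∀ i, 0 ≤ c i)
    (P' : MixtureOfMeasures Ω)
    (hV : P'.V 2 = P.V 2) :
    P'.Equal P := by
  have := P.prob
  have := P'.prob
  have hV2 : ∀ A B : Set Ω, ∑ j, P'.w j * ((P'.μ j A).toReal * (P'.μ j B).toReal) =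
      ∑ i, P.w i * ((P.μ i A).toReal * (P.μ i B).toReal) := fun A B => by
    rw [← P'.V_two_pi_toReal, ← P.V_two_pi_toReal, hV]
  obtain ⟨C, hC⟩ : ∃ C : Matrix (Fin P'.m) (Fin P.m) ℝ,
      ∀ j A, (P'.μ j A).toReal = ∑ i, C j i * (P.μ i A).toReal := by
    choose C hC using fun j => (Submodule.mem_span_range_iff_exists_fun ℝ).1
      (mem_span_range_of_sum_mul_mul_eq P'.pos hV2 j)
    exact ⟨C, fun j A => by simpa using (congrFun (hC j) A).symm⟩
  have hC0 : ∀ j i, 0 ≤ C j i := fun j => hji (C j) (P'.μ j) inferInstance fun A _ => hC j A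
  have hC1 : ∀ j, ∑ i, C j i = 1 := fun j => by simpa using (hC j Set.univ).symm
  have hgram : Cᵀ * diagonal P'.w * C = diagonal P.w :=
    JointlyIrreducible.linearIndependent hji |>.transpose_mul_diagonal_mul_eq_diagonal
      fun A B => by simpa only [← hC] using hV2 A B
  obtain ⟨σ, hσC, hσw⟩ :=
    exists_eq_single_of_transpose_mul_diagonal_mul_eq_diagonal hC0 hC1 P'.pos hgram
  have hμ : ∀ j, P'.μ j = P.μ (σ j) := fun j => Measure.ext fun A _ => by
    rw [← measureReal_eq_measureReal_iff (measure_ne_top _ _) (measure_ne_top _ _)]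
    simpa [hσC j, Pi.single_apply, measureReal_def] using hC j A
  have hσinj : σ.Injective := fun j j' h => P'.inj (by rw [hμ, hμ, h])
  have hσsurj : σ.Surjective :=
    Function.surjective_of_sum_fiber_ne_zero fun i => (hσw i).symm ▸ (P.pos i).ne'
  refine MixtureOfMeasures.Equal.symm
    ⟨Equiv.ofBijective σ ⟨hσinj, hσsurj⟩, fun j => ⟨hμ j, ?_⟩⟩
  show P'.w j = P.w (σ j)
  rw [← hσw, hσinj.sum_fiber_apply]
end

section
/- Let Ω = {ω_1, ..., ω_d} be a finite set and μ_1, ..., μ_m distinct probability measures on Ω. Let y_1, ..., y_d be iid uniform random variables on [1,2] and let ξ be the random measure defined by ξ({ω_i}) = y_i. Let p_i = dμ_i/dξ, i.e., p_i(ω_j) = μ_i({ω_j})/y_j. Then with probability one, ∫ p_i² dξ ≠ ∫ p_j² dξ for all i ≠ j, i.e., the L²(ξ)-norms of p_1, ..., p_m are almost surely distinct. -/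
/-!
The difference of the two norms is `∑ k, c k / y k` with `c k = μ i k ^ 2 - μ j k ^ 2`, and
`c k₀ ≠ 0` for some `k₀` because the measures differ at `k₀` and squaring is injective on
`[0, ∞)`. The summand `c k₀ / y k₀` has an atomless law and is independent of the other
summands; convolving any law with an atomless one gives an atomless law, so the sum vanishes
with probability zero.
-/

open MeasureTheory ProbabilityTheory Function

namespace MeasureTheory.Measure

variable {α β : Type*} [MeasurableSpace α] [MeasurableSpace β]

theorem nullSingletonClass_map_of_injective [MeasurableSingletonClass β] {μ : Measure α}
    [NullSingletonClass μ] {f : α → β} (hf : AEMeasurable f μ) (hinj : Injective f) :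
    NullSingletonClass (μ.map f) where
  measure_singleton b := by
    rw [map_apply_of_aemeasurable hf (measurableSet_singleton b)]
    exact (Set.subsingleton_singleton.preimage hinj).measure_zero μ

theorem nullSingletonClass_conv {G : Type*} [AddGroup G] [MeasurableSpace G] [MeasurableAdd₂ G]
    [MeasurableSingletonClass G] (μ ν : Measure G) [SFinite ν] [NullSingletonClass ν] :
    NullSingletonClass (μ ∗ ν) where
  measure_singleton t := by
    have hsum : Measurable fun p : G × G => p.1 + p.2 := measurable_add
    rw [conv, map_apply hsum (measurableSet_singleton t),
      prod_apply (hsum (measurableSet_singleton t))]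
    refine lintegral_eq_zero_of_ae_eq_zero (.of_forall fun x => ?_)
    exact (Set.subsingleton_singleton.preimage (add_right_injective x)).measure_zero ν

theorem nullSingletonClass_map_const_div {μ : Measure ℝ} [NullSingletonClass μ] {c : ℝ}
    (hc : c ≠ 0) : NullSingletonClass (μ.map (c / ·)) :=
  nullSingletonClass_map_of_injective (measurable_id.const_div c).aemeasurable fun a b h =>
    inv_injective (mul_right_injective₀ hc (by simpa only [div_eq_mul_inv] using h))

end MeasureTheory.Measure

namespace ProbabilityTheory

variable {Ω G : Type*} [MeasurableSpace Ω] {P : Measure Ω} [IsFiniteMeasure P]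
  [MeasurableSpace G] [MeasurableSingletonClass G]

theorem IndepFun.nullSingletonClass_map_add [AddGroup G] [MeasurableAdd₂ G] {X Y : Ω → G}
    (hXY : IndepFun X Y P) (hX : AEMeasurable X P) (hY : AEMeasurable Y P)
    [NullSingletonClass (P.map Y)] :
    NullSingletonClass (P.map (X + Y)) := by
  rw [hXY.map_add_eq_map_conv_map₀ hX hY]
  exact Measure.nullSingletonClass_conv _ _

theorem iIndepFun.nullSingletonClass_map_sum [AddCommGroup G] [MeasurableAdd₂ G] {ι : Type*}
    [Fintype ι] {X : ι → Ω → G} (hX : iIndepFun X P) (hXm : ∀ k, AEMeasurable (X k) P)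
    (k₀ : ι)
    [NullSingletonClass (P.map (X k₀))] :
    NullSingletonClass (P.map (∑ k, X k)) := by
  classical
  rw [← Finset.sum_erase_add _ _ (Finset.mem_univ k₀)]
  exact (hX.indepFun_finsetSum_of_notMem₀ hXm (Finset.notMem_erase k₀ _))
    |>.nullSingletonClass_map_add (Finset.aemeasurable_sum _ fun k _ => hXm k) (hXm k₀)

theorem iIndepFun.ae_sum_const_div_ne_zero {ι : Type*} [Fintype ι] {Y : ι → Ω → ℝ}
    (hY : iIndepFun Y P) (hYm : ∀ k, AEMeasurable (Y k) P) {c : ι → ℝ} {k₀ : ι}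
    (hc : c k₀ ≠ 0)
    [NullSingletonClass (P.map (Y k₀))] :
    ∀ᵐ ω ∂P, ∑ k, c k / Y k ω ≠ 0 := by
  set X : ι → Ω → ℝ := fun k ω => c k / Y k ω
  have hXm : ∀ k, AEMeasurable (X k) P := fun k => (hYm k).const_div (c k)
  have hX : iIndepFun X P := hY.comp (fun k x => c k / x) fun k => measurable_id.const_div (c k)
  have : NullSingletonClass (P.map (X k₀)) := by
    rw [show X k₀ = (c k₀ / ·) ∘ Y k₀ from rfl, ← AEMeasurable.map_map_of_aemeasurable
      (by fun_prop : Measurable (c k₀ / · : ℝ → ℝ)).aemeasurable (hYm k₀)]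
    exact Measure.nullSingletonClass_map_const_div hc
  have := hX.nullSingletonClass_map_sum hXm k₀
  simpa only [Finset.sum_apply] using
    ae_of_ae_map (Finset.aemeasurable_sum _ fun k _ => hXm k) ((P.map (∑ k, X k)).ae_ne 0)

end ProbabilityTheory

theorem random_dominating_measure_distinct_norms_general
    {Ω' : Type*} [MeasurableSpace Ω'] (P : Measure Ω') [IsProbabilityMeasure P]
    (d m : ℕ) (μ : Fin m → Fin d → ℝ)
    (hμ0 : ∀ i k, 0 ≤ μ i k)
    (hdist : Function.Injective μ)
    (y : Fin d → Ω' → ℝ) (hmeas : ∀ k, Measurable (y k))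
    (hindep : ProbabilityTheory.iIndepFun y P)
    (hunif : ∀ k, Measure.map (y k) P = volume.restrict (Set.Icc (1 : ℝ) 2)) :
    ∀ᵐ ω ∂P, ∀ i j : Fin m, i ≠ j →
      (∑ k, (μ i k) ^ 2 / y k ω) ≠ ∑ k, (μ j k) ^ 2 / y k ω := by
  refine ae_all_iff.2 fun i => ae_all_iff.2 fun j => ?_
  by_cases hij : i = j
  · exact .of_forall fun _ hne => absurd hij hne
  obtain ⟨k₀, hk₀⟩ := Function.ne_iff.1 (hdist.ne hij)
  have hc : μ i k₀ ^ 2 - μ j k₀ ^ 2 ≠ 0 :=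
    sub_ne_zero.2 fun h => hk₀ ((sq_eq_sq₀ (hμ0 i k₀) (hμ0 j k₀)).1 h)
  have : NullSingletonClass (P.map (y k₀)) := by rw [hunif k₀]; infer_instance
  filter_upwards [hindep.ae_sum_const_div_ne_zero (c := fun k => μ i k ^ 2 - μ j k ^ 2)
    (fun k => (hmeas k).aemeasurable) hc] with ω hω _
  simpa only [sub_div, Finset.sum_sub_distrib, sub_ne_zero] using hω

/-- Random dominating measure trick: if `μ 1, …, μ m` are distinct probability measures on a
finite set of `d` points (given by their probability vectors), `y 1, …, y d` are iid uniform
random variables on `[1,2]`, and `ξ` is the random measure with `ξ({ω_k}) = y k`, then with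
probability one the `L²(ξ)`-norms `∫ p_i² dξ = ∑_k μ_i({ω_k})² / y_k` of the densities
`p_i = dμ_i/dξ` are pairwise distinct. -/
theorem random_dominating_measure_distinct_norms
    {Ω' : Type*} [MeasurableSpace Ω'] (P : Measure Ω') [IsProbabilityMeasure P]
    (d m : ℕ) (μ : Fin m → Fin d → ℝ)
    (hμ0 : ∀ i k, 0 ≤ μ i k) (hμ1 : ∀ i, ∑ k, μ i k = 1)
    (hdist : Function.Injective μ)
    (y : Fin d → Ω' → ℝ) (hmeas : ∀ k, Measurable (y k))
    (hindep : ProbabilityTheory.iIndepFun y P)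
    (hunif : ∀ k, Measure.map (y k) P = volume.restrict (Set.Icc (1 : ℝ) 2)) :
    ∀ᵐ ω ∂P, ∀ i j : Fin m, i ≠ j →
      (∑ k, (μ i k) ^ 2 / y k ω) ≠ ∑ k, (μ j k) ^ 2 / y k ω :=
  random_dominating_measure_distinct_norms_general P d m μ hμ0 hdist y hmeas hindep hunif
end

section
/- Fix m, n, q ∈ ℕ₊ with n ≥ 2m − 1. Suppose Σ_{i=1}^m a_i Q_{n,p_i,q} = Σ_{j=1}^s b_j Q_{n,r_j,q} where s ≤ m, the multinomial measures Q_{n,p_1,q},...,Q_{n,p_m,q} are distinct, Q_{n,r_1,q},...,Q_{n,r_s,q} are distinct, all a_i, b_j > 0, and Σ a_i = Σ b_j = 1. Then s = m and there is a permutation σ of {1,...,m} with a_i = b_{σ(i)} and p_i = r_{σ(i)} for all i. -/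
open Finset

/-- `C_{n,q} = {x ∈ ℕ^q : ∑ x_i = n}`, the support of the multinomial distribution with
`n` trials and `q` categories. -/
def Cnq (n q : ℕ) : Finset (Fin q → ℕ) :=
  (Fintype.piFinset fun _ : Fin q => Finset.range (n + 1)).filter fun x => ∑ j, x j = n

/-- Probability mass function of the multinomial distribution `Q_{n,p,q}`:
`Q_{n,p,q}({x}) = n!/(x_1! ⋯ x_q!) · p_1^{x_1} ⋯ p_q^{x_q}`. -/
noncomputable def multinomialMass (n : ℕ) {q : ℕ} (p : Fin q → ℝ) (x : Fin q → ℕ) : ℝ :=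
  ((n.factorial : ℝ) / ∏ j, ((x j).factorial : ℝ)) * ∏ j, p j ^ x j

/-!
The difference of the two mixtures is a signed combination `∑ᵤ A u • Q_{n,u,q}` over the finite
set `V` of all components, with `#V ≤ m + s ≤ n + 1`. By the multinomial theorem, pairing it with
`x ↦ ∏ⱼ zⱼ ^ xⱼ` gives `∑ᵤ A u (u ⬝ᵥ z) ^ n`. Taking `zⱼ = 1 + wʲ t` for a `w` that separates the
points of `V` turns this into `∑ᵤ A u (1 + βᵤ t) ^ n` with distinct `βᵤ`, and these `≤ n + 1`
polynomials in `t` are linearly independent (their coefficient matrix is a Vandermonde matrix).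
So all `A u` vanish: the two mixing measures `∑ aᵢ δ_{pᵢ}` and `∑ bⱼ δ_{rⱼ}` coincide.
-/

lemma Cnq_eq_piAntidiag (n q : ℕ) : Cnq n q = piAntidiag univ n := by
  ext x
  simp only [Cnq, mem_filter, Fintype.mem_piFinset, mem_range, mem_piAntidiag, Nat.lt_succ_iff,
    mem_univ, implies_true, and_true, and_iff_right_iff_imp]
  rintro rfl j
  exact single_le_sum (fun i _ => Nat.zero_le _) (mem_univ j)

theorem multinomialMass_eq_multinomial {n q : ℕ} (u : Fin q → ℝ) {x : Fin q → ℕ}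
    (hx : x ∈ Cnq n q) : multinomialMass n u x = Nat.multinomial univ x * ∏ j, u j ^ x j := by
  rw [Cnq_eq_piAntidiag, mem_piAntidiag] at hx
  rw [multinomialMass, ← hx.1, ← Nat.multinomial_spec, Nat.cast_mul, Nat.cast_prod,
    mul_div_cancel_left₀ _ (by positivity)]

theorem sum_multinomialMass_mul_prod_pow (n : ℕ) {q : ℕ} (u z : Fin q → ℝ) :
    ∑ x ∈ Cnq n q, multinomialMass n u x * ∏ j, z j ^ x j = (∑ j, u j * z j) ^ n := by
  rw [sum_pow_eq_sum_piAntidiag, ← Cnq_eq_piAntidiag]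
  refine sum_congr rfl fun x hx => ?_
  rw [multinomialMass_eq_multinomial u hx, mul_assoc, ← prod_mul_distrib]
  simp only [mul_pow]

open Polynomial

theorem exists_injOn_sum_mul_pow_s18 {K : Type*} [Field K] [Infinite K] {q : ℕ}
    (V : Finset (Fin q → K)) :
    ∃ w : K, Set.InjOn (fun u : Fin q → K => ∑ j, u j * w ^ (j : ℕ)) V := by
  classical
  have heval (u : Fin q → K) (w : K) : (ofFn q u).eval w = ∑ j, u j * w ^ (j : ℕ) := by
    simp [ofFn_eq_sum_monomial, eval_finsetSum]
  have hfin : ∀ uv ∈ (V ×ˢ V).filter (fun uv => uv.1 ≠ uv.2),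
      {w : K | (ofFn q uv.1 - ofFn q uv.2).IsRoot w}.Finite := fun uv huv =>
    finite_setOfPred_isRoot (sub_ne_zero.mpr ((injective_ofFn q).ne (mem_filter.mp huv).2))
  obtain ⟨w, hw⟩ := (Set.Finite.biUnion (finite_toSet _) hfin).infinite_compl.nonempty
  refine ⟨w, fun u hu v hv huv => by_contra fun hne => hw ?_⟩
  refine Set.mem_biUnion (x := (u, v)) (mem_filter.mpr ⟨mem_product.mpr ⟨hu, hv⟩, hne⟩) ?_
  simpa [IsRoot, heval, sub_eq_zero] using huv

lemma coeff_one_add_C_mul_X_pow {R : Type*} [CommSemiring R] (b : R) (n k : ℕ) :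
    ((1 + C b * X) ^ n).coeff k = n.choose k * b ^ k := by
  have : (1 + C b * X) ^ n = ((1 + X) ^ n).comp (C b * X) := by
    simp [pow_comp]
  rw [this, comp_C_mul_X_coeff, coeff_one_add_X_pow]

theorem linearIndepOn_one_add_mul_pow {K : Type*} [Field K] [CharZero K] {n : ℕ}
    {S : Finset K} (hS : #S ≤ n + 1) :
    LinearIndepOn K (fun b (t : K) => (1 + b * t) ^ n) (S : Set K) := by
  rw [linearIndepOn_finset_iff]
  intro c hc
  have hP : ∑ b ∈ S, C (c b) * (1 + C b * X) ^ n = 0 := Polynomial.funext fun t => by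
    simpa [eval_finsetSum] using congrFun hc t
  have hmoment : ∀ e ≤ n, ∑ b ∈ S, c b * b ^ e = 0 := by
    intro e he
    have hcoeff := congrArg (coeff · e) hP
    simp only [finsetSum_coeff, coeff_C_mul, coeff_one_add_C_mul_X_pow, coeff_zero] at hcoeff
    have hchoose : (n.choose e : K) ≠ 0 := by exact_mod_cast (Nat.choose_pos he).ne'
    rw [← mul_right_inj' hchoose, mul_sum, mul_zero, ← hcoeff]
    exact sum_congr rfl fun b _ => by ring
  let f : Fin #S → K := fun i => S.equivFin.symm i
  have hsum (g : K → K) : ∑ i, g (f i) = ∑ b ∈ S, g b :=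
    (Equiv.sum_comp S.equivFin.symm (fun b : S => g b)).trans (sum_coe_sort S g)
  have hc0 : c ∘ f = 0 := Matrix.eq_zero_of_forall_pow_sum_mul_pow_eq_zero
    (fun i j h => S.equivFin.symm.injective (Subtype.ext h))
    fun e => (hsum fun b => c b * b ^ (e : ℕ)).trans (hmoment e (by omega))
  intro b hb
  simpa [f] using congrFun hc0 (S.equivFin ⟨b, hb⟩)

theorem linearIndepOn_multinomialMass (n : ℕ) {q : ℕ} {V : Finset (Fin q → ℝ)}
    (hV : ∀ u ∈ V, ∑ j, u j = 1) (hcard : #V ≤ n + 1) :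
    LinearIndepOn ℝ (fun u (x : Cnq n q) => multinomialMass n u x) (V : Set (Fin q → ℝ)) := by
  obtain ⟨w, hw⟩ := exists_injOn_sum_mul_pow_s18 V
  set β : (Fin q → ℝ) → ℝ := fun u => ∑ j, u j * w ^ (j : ℕ)
  let L := Fintype.linearCombination ℝ fun (x : Cnq n q) (t : ℝ) =>
    ∏ j : Fin q, (1 + w ^ (j : ℕ) * t) ^ (x : Fin q → ℕ) j
  refine LinearIndepOn.of_comp L ?_
  have hβV := linearIndepOn_one_add_mul_pow (n := n)
    (card_image_le (s := V) (f := β) |>.trans hcard)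
  rw [coe_image] at hβV
  have hβ := hβV.comp_of_image hw
  refine hβ.congr fun u hu => funext fun t => ?_
  have hdot : ∑ j, u j * (1 + w ^ (j : ℕ) * t) = 1 + β u * t := by
    simp only [mul_add, mul_one, sum_add_distrib, hV u hu, β, sum_mul, mul_assoc]
  simp only [Function.comp_apply, L, Fintype.linearCombination_apply, Finset.sum_apply,
    Pi.smul_apply, smul_eq_mul]
  rw [sum_coe_sort (Cnq n q)
      fun x => multinomialMass n u x * ∏ j : Fin q, (1 + w ^ (j : ℕ) * t) ^ x j,
    sum_multinomialMass_mul_prod_pow, hdot]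

theorem exists_equiv_of_sum_single_eq {ι κ E M : Type*} [Fintype ι] [Fintype κ]
    [AddCommMonoid M] {a : ι → M} {b : κ → M} {p : ι → E} {r : κ → E}
    (hp : Function.Injective p) (hr : Function.Injective r)
    (hcard : Fintype.card κ ≤ Fintype.card ι) (ha : ∀ i, a i ≠ 0)
    (h : ∑ i, Finsupp.single (p i) (a i) = ∑ j, Finsupp.single (r j) (b j)) :
    ∃ σ : ι ≃ κ, ∀ i, a i = b (σ i) ∧ p i = r (σ i) := by
  classical
  have heval (i : ι) : a i = ∑ j, if r j = p i then b j else 0 := by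
    simpa [Finsupp.finsetSum_apply, Finsupp.single_apply, hp.eq_iff] using
      DFunLike.congr_fun h (p i)
  have hmatch (i : ι) : ∃ j, p i = r j := by
    by_contra! hne
    exact ha i ((heval i).trans (sum_eq_zero fun j _ => if_neg (hne j).symm))
  choose σ hσ using hmatch
  have hσinj : Function.Injective σ := fun i i' h => hp (by rw [hσ i, hσ i', h])
  have hσbij : Function.Bijective σ :=
    (Fintype.bijective_iff_injective_and_card σ).mpr
      ⟨hσinj, le_antisymm (Fintype.card_le_of_injective σ hσinj) hcard⟩
  refine ⟨Equiv.ofBijective σ hσbij, fun i => ⟨?_, hσ i⟩⟩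
  rw [heval i, sum_eq_single (σ i)]
  · simp [hσ i]
  · intro j _ hj
    exact if_neg fun h => hj (hr (h.trans (hσ i)))
  · simp

lemma injective_of_multinomialMass_ne {ι : Type*} {n q : ℕ} {p : ι → Fin q → ℝ}
    (h : ∀ i i', i ≠ i' →
      ∃ x ∈ Cnq n q, multinomialMass n (p i) x ≠ multinomialMass n (p i') x) :
    Function.Injective p := fun i i' hpp => by
  by_contra hne
  obtain ⟨x, -, hx⟩ := h i i' hne
  exact hx (by rw [hpp])

theorem multinomial_mixture_identifiable_general
    (m s n q : ℕ)
    (hn : 2 * m - 1 ≤ n) (hs : s ≤ m)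
    (a : Fin m → ℝ) (b : Fin s → ℝ)
    (p : Fin m → Fin q → ℝ) (r : Fin s → Fin q → ℝ)
    (hp1 : ∀ i, ∑ j, p i j = 1)
    (hr1 : ∀ i, ∑ j, r i j = 1)
    (hpd : ∀ i i', i ≠ i' →
      ∃ x ∈ Cnq n q, multinomialMass n (p i) x ≠ multinomialMass n (p i') x)
    (hrd : ∀ j j', j ≠ j' →
      ∃ x ∈ Cnq n q, multinomialMass n (r j) x ≠ multinomialMass n (r j') x)
    (ha : ∀ i, 0 < a i)
    (heq : ∀ x ∈ Cnq n q,
      ∑ i, a i * multinomialMass n (p i) x = ∑ j, b j * multinomialMass n (r j) x) :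
    ∃ σ : Fin m ≃ Fin s, ∀ i, a i = b (σ i) ∧ p i = r (σ i) := by
  classical
  set V := univ.image p ∪ univ.image r
  have hpV (i : Fin m) : p i ∈ V := mem_union_left _ (mem_image_of_mem p (mem_univ i))
  have hrV (j : Fin s) : r j ∈ V := mem_union_right _ (mem_image_of_mem r (mem_univ j))
  have hV : ∀ u ∈ V, ∑ j, u j = 1 := by
    simp only [V, mem_union, mem_image, mem_univ, true_and]
    rintro u (⟨i, rfl⟩ | ⟨j, rfl⟩)
    exacts [hp1 i, hr1 j]
  have hcard : #V ≤ n + 1 := calc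
    #V ≤ #(univ.image p) + #(univ.image r) := card_union_le _ _
    _ ≤ m + s := add_le_add (card_image_le.trans (by simp)) (card_image_le.trans (by simp))
    _ ≤ n + 1 := by omega
  have hmix : ∑ i, Finsupp.single (p i) (a i) = ∑ j, Finsupp.single (r j) (b j) := by
    refine linearIndepOn_iffₛ.mp (linearIndepOn_multinomialMass n hV hcard) _
      (Submodule.sum_mem _ fun i _ => Finsupp.single_mem_supported ℝ _ (hpV i)) _
      (Submodule.sum_mem _ fun j _ => Finsupp.single_mem_supported ℝ _ (hrV j)) ?_
    ext x
    simpa [map_sum, Finsupp.linearCombination_single] using heq x x.2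
  exact exists_equiv_of_sum_single_eq (injective_of_multinomialMass_ne hpd)
    (injective_of_multinomialMass_ne hrd) (by simpa using hs) (fun i => (ha i).ne') hmix

/-- Identifiability of multinomial mixture models: if `n ≥ 2m - 1`, two mixtures of
multinomial distributions `Q_{n,·,q}` (with distinct components, positive weights summing to
one, and the second mixture of order `s ≤ m`) that are equal as measures on `C_{n,q}` must
coincide up to a permutation. -/
theorem multinomial_mixture_identifiable
    (m s n q : ℕ) (hm : 0 < m) (hq : 0 < q) (hn0 : 0 < n)
    (hn : 2 * m - 1 ≤ n) (hs : s ≤ m)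
    (a : Fin m → ℝ) (b : Fin s → ℝ)
    (p : Fin m → Fin q → ℝ) (r : Fin s → Fin q → ℝ)
    (hp0 : ∀ i j, 0 ≤ p i j) (hp1 : ∀ i, ∑ j, p i j = 1)
    (hr0 : ∀ i j, 0 ≤ r i j) (hr1 : ∀ i, ∑ j, r i j = 1)
    (hpd : ∀ i i', i ≠ i' →
      ∃ x ∈ Cnq n q, multinomialMass n (p i) x ≠ multinomialMass n (p i') x)
    (hrd : ∀ j j', j ≠ j' →
      ∃ x ∈ Cnq n q, multinomialMass n (r j) x ≠ multinomialMass n (r j') x)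
    (ha : ∀ i, 0 < a i) (hb : ∀ j, 0 < b j)
    (hsa : ∑ i, a i = 1) (hsb : ∑ j, b j = 1)
    (heq : ∀ x ∈ Cnq n q,
      ∑ i, a i * multinomialMass n (p i) x = ∑ j, b j * multinomialMass n (r j) x) :
    ∃ σ : Fin m ≃ Fin s, ∀ i, a i = b (σ i) ∧ p i = r (σ i) :=
  multinomial_mixture_identifiable_general m s n q hn hs a b p r hp1 hr1 hpd hrd ha heq
end
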